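/- arXiv:2503.19792 — 7 statements merged into one kernel-verified Lean document; each statement's English description precedes it below -/
import Mathlib

section
/- There exists a universal constant c > 0 such that for every ε with 0 < ε < 1/2, every n ∈ ℕ, and every family of points x_1, …, x_n ∈ ℝ² satisfying ‖x_i − x_j‖ ≤ 1 for all i, j, the number of ordered pairs (i,j) with ‖x_i − x_j‖ ≤ ε is at least c · ε times the number of ordered pairs (i,j) with ‖x_i − x_j‖ ≥ 1 − ε. -/
open Finset

namespace AntipodeAux
noncomputable section
attribute [local instance] Classical.propDecidable

def g (ε : ℝ) (u : ℤ × ℤ) : ℝ := (ε/2*u.1)^2 + (ε/2*u.2)^2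

def annCond (ε : ℝ) (u : ℤ × ℤ) : Prop :=
  (max (1 - 5/2*ε) 0)^2 ≤ g ε u ∧ g ε u ≤ (1 + 3/2*ε)^2

lemma g_neg (ε : ℝ) (u : ℤ × ℤ) : g ε (-u) = g ε u := by
  simp [g]

lemma g_swap (ε : ℝ) (u : ℤ × ℤ) : g ε u.swap = g ε u := by
  simp [g]; ring

lemma int_card_Icc_le (a b : ℤ) : ((Finset.Icc a b).card : ℝ) ≤ max ((b:ℝ) - a + 1) 0 := by
  rw [Int.card_Icc]
  rcases le_or_gt a (b+1) with h | h
  · refine le_max_of_le_left ?_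
    have h2 : ((b + 1 - a).toNat : ℤ) = b + 1 - a := Int.toNat_of_nonneg (by omega)
    have : ((b + 1 - a).toNat : ℝ) = ((b:ℝ) + 1 - a) := by exact_mod_cast h2
    rw [this]; ring_nf; norm_num
  · rw [Int.toNat_of_nonpos (by omega)]
    simp

private lemma sqrt_diff {L U e : ℝ} (he : 0 < e) (hL : 7/20 ≤ L) (hLU : L ≤ U)
    (h : U^2 - L^2 ≤ 8*e) : U - L ≤ 12*e := by nlinarith

/-- Column bound -/
lemma column_bound {ε : ℝ} (hε0 : 0 < ε) (hε : ε ≤ 1/5) (a : ℤ)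
    (S : Finset ℤ) (hS : ∀ m ∈ S, annCond ε (a, m) ∧ a^2 ≤ m^2) :
    (S.card : ℝ) ≤ 50 := by
  rcases S.eq_empty_or_nonempty with rfl | ⟨m₀, hm₀⟩
  · norm_num
  have hq0 : (0:ℝ) < ε/2 := by positivity
  have hmax : max (1 - 5/2*ε) 0 = 1 - 5/2*ε := max_eq_left (by linarith)
  -- bounds on elements
  have key : ∀ m ∈ S, max ((ε/2*(a:ℝ))^2) ((1 - 5/2*ε)^2 - (ε/2*(a:ℝ))^2) ≤ (ε/2*(m:ℝ))^2
      ∧ (ε/2*(m:ℝ))^2 ≤ (1 + 3/2*ε)^2 - (ε/2*(a:ℝ))^2 := by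
    intro m hm
    obtain ⟨⟨h1, h2⟩, h3⟩ := hS m hm
    rw [hmax] at h1
    unfold g at h1 h2
    have h3' : ((a:ℝ))^2 ≤ ((m:ℝ))^2 := by exact_mod_cast h3
    refine ⟨max_le ?_ (by simp only [Prod.fst, Prod.snd] at h1 h2 ⊢; nlinarith), ?_⟩
    · have := mul_le_mul_of_nonneg_left h3' (le_of_lt (mul_pos hq0 hq0))
      calc (ε/2*(a:ℝ))^2 = ε/2*(ε/2) * (a:ℝ)^2 := by ring
        _ ≤ ε/2*(ε/2) * (m:ℝ)^2 := this
        _ = (ε/2*(m:ℝ))^2 := by ring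
    · simp only [Prod.fst, Prod.snd] at h1 h2 ⊢; nlinarith
  set A : ℝ := (ε/2*(a:ℝ))^2 with hA
  have hA0 : 0 ≤ A := sq_nonneg _
  set L2 : ℝ := max A ((1 - 5/2*ε)^2 - A) with hL2
  set U2 : ℝ := (1 + 3/2*ε)^2 - A with hU2
  clear_value A L2 U2

  have hL2lb : (1:ℝ)/8 ≤ L2 := by
    have havg : (1 - 5/2*ε)^2 / 2 ≤ L2 := by
      rcases le_total A ((1 - 5/2*ε)^2 - A) with h | h
      · rw [hL2, max_eq_right h]; linarith
      · rw [hL2, max_eq_left h]; linarith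
    nlinarith
  have hU2L2 : U2 - L2 ≤ 8*ε := by
    have : (1 - 5/2*ε)^2 - A ≤ L2 := hL2 ▸ le_max_right _ _
    rw [hU2]; nlinarith
  have hLU2 : L2 ≤ U2 := le_trans (key m₀ hm₀).1 (key m₀ hm₀).2
  set L : ℝ := Real.sqrt L2 with hL
  set U : ℝ := Real.sqrt U2 with hU
  have hLsq : L^2 = L2 := Real.sq_sqrt (by linarith)
  have hUsq : U^2 = U2 := Real.sq_sqrt (by linarith)
  have hLlb : (7:ℝ)/20 ≤ L := by
    have h1 : Real.sqrt ((7/20)^2) ≤ Real.sqrt L2 := Real.sqrt_le_sqrt (by nlinarith)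
    rwa [Real.sqrt_sq (by norm_num)] at h1
  have hLleU : L ≤ U := hU ▸ hL ▸ Real.sqrt_le_sqrt hLU2
  have hUL : U - L ≤ 12*ε := sqrt_diff hε0 hLlb hLleU (by rw [hLsq, hUsq]; exact hU2L2)
  clear_value L U
  -- membership of elements of S in two integer intervals
  have habs : ∀ m ∈ S, L ≤ ε/2*|(m:ℝ)| ∧ ε/2*|(m:ℝ)| ≤ U := by
    intro m hm
    obtain ⟨k1, k2⟩ := key m hm
    have e1 : ε/2*|(m:ℝ)| = Real.sqrt ((ε/2*(m:ℝ))^2) := by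
      rw [Real.sqrt_sq_eq_abs, abs_mul, abs_of_pos hq0]
    constructor
    · rw [e1, hL]; exact Real.sqrt_le_sqrt k1
    · rw [e1, hU]; exact Real.sqrt_le_sqrt k2
  have hmem : ∀ m ∈ S, m ∈ Finset.Icc ⌈L/(ε/2)⌉ ⌊U/(ε/2)⌋ ∪
      Finset.Icc ⌈-(U/(ε/2))⌉ ⌊-(L/(ε/2))⌋ := by
    intro m hm
    obtain ⟨k1, k2⟩ := habs m hm
    have hm0 : (m:ℝ) ≠ 0 := by
      intro h0
      rw [h0] at k1; simp at k1; linarith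
    rcases abs_cases (m:ℝ) with ⟨he, _⟩ | ⟨he, hneg⟩
    · refine Finset.mem_union_left _ (Finset.mem_Icc.2 ⟨?_, ?_⟩)
      · rw [Int.ceil_le, div_le_iff₀ hq0]
        rw [he] at k1; linarith
      · rw [Int.le_floor, le_div_iff₀ hq0]
        rw [he] at k2; linarith
    · refine Finset.mem_union_right _ (Finset.mem_Icc.2 ⟨?_, ?_⟩)
      · rw [Int.ceil_le, neg_le, ← Int.cast_neg, le_div_iff₀ hq0]
        rw [he] at k2; push_cast; linarith
      · rw [Int.le_floor, le_neg, ← Int.cast_neg, div_le_iff₀ hq0]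
        rw [he] at k1; push_cast; linarith
  -- conclude by counting the two intervals
  have hdiff : U/(ε/2) - L/(ε/2) ≤ 24 := by
    rw [div_sub_div_same]
    rw [div_le_iff₀ hq0]
    linarith
  have hcard : (S.card : ℝ) ≤ ((Finset.Icc ⌈L/(ε/2)⌉ ⌊U/(ε/2)⌋).card : ℝ) +
      ((Finset.Icc ⌈-(U/(ε/2))⌉ ⌊-(L/(ε/2))⌋).card : ℝ) := by
    have h1 : S.card ≤ (Finset.Icc ⌈L/(ε/2)⌉ ⌊U/(ε/2)⌋ ∪
        Finset.Icc ⌈-(U/(ε/2))⌉ ⌊-(L/(ε/2))⌋).card :=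
      Finset.card_le_card hmem
    have h2 := Finset.card_union_le (Finset.Icc ⌈L/(ε/2)⌉ ⌊U/(ε/2)⌋)
        (Finset.Icc ⌈-(U/(ε/2))⌉ ⌊-(L/(ε/2))⌋)
    exact_mod_cast le_trans h1 h2
  have hc1 : ((Finset.Icc ⌈L/(ε/2)⌉ ⌊U/(ε/2)⌋).card : ℝ) ≤ 25 := by
    refine le_trans (int_card_Icc_le _ _) (max_le ?_ (by norm_num))
    have := Int.floor_le (U/(ε/2))
    have := Int.le_ceil (L/(ε/2))
    linarith
  have hc2 : ((Finset.Icc ⌈-(U/(ε/2))⌉ ⌊-(L/(ε/2))⌋).card : ℝ) ≤ 25 := by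
    refine le_trans (int_card_Icc_le _ _) (max_le ?_ (by norm_num))
    have := Int.floor_le (-(L/(ε/2)))
    have := Int.le_ceil (-(U/(ε/2)))
    linarith
  linarith


def K (ε : ℝ) : ℤ := ⌈(4:ℝ)/ε⌉

def box (ε : ℝ) : Finset (ℤ × ℤ) :=
  (Finset.Icc (-(K ε)) (K ε)) ×ˢ (Finset.Icc (-(K ε)) (K ε))

def T (ε : ℝ) : Finset (ℤ × ℤ) := (box ε).filter (annCond ε)

lemma card_Icc_K {ε : ℝ} (hε0 : 0 < ε) (hε2 : ε < 1/2) :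
    ((Finset.Icc (-(K ε)) (K ε)).card : ℝ) ≤ 14/ε := by
  refine le_trans (int_card_Icc_le _ _) (max_le ?_ (by positivity))
  have h1 : (K ε : ℝ) < 4/ε + 1 := by
    have := Int.ceil_lt_add_one ((4:ℝ)/ε)
    exact this
  have h2 : (3:ℝ) ≤ 6/ε := by
    rw [le_div_iff₀ hε0]; linarith
  have h3 : 2*((4:ℝ)/ε) = 8/ε := by ring
  have h4 : (8:ℝ)/ε + 6/ε = 14/ε := by ring
  push_cast
  linarith

lemma card_T {ε : ℝ} (hε0 : 0 < ε) (hε2 : ε < 1/2) : ((T ε).card : ℝ) ≤ 2000 / ε := by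
  rcases le_or_gt ε (1/5) with hsmall | hbig
  · -- octant split
    set T1 := (T ε).filter (fun u : ℤ × ℤ => u.1^2 ≤ u.2^2) with hT1
    set T2 := (T ε).filter (fun u : ℤ × ℤ => u.2^2 ≤ u.1^2) with hT2
    have hsplit : (T ε).card ≤ T1.card + T2.card := by
      have : T ε ⊆ T1 ∪ T2 := by
        intro u hu
        rcases le_total (u.1^2) (u.2^2) with h | h
        · exact Finset.mem_union_left _ (Finset.mem_filter.2 ⟨hu, h⟩)
        · exact Finset.mem_union_right _ (Finset.mem_filter.2 ⟨hu, h⟩)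
      exact le_trans (Finset.card_le_card this) (Finset.card_union_le _ _)
    have hT1card : (T1.card : ℝ) ≤ 50 * ((Finset.Icc (-(K ε)) (K ε)).card : ℝ) := by
      have hfib : T1.card = ∑ a ∈ Finset.Icc (-(K ε)) (K ε),
          (T1.filter (fun u => u.1 = a)).card := by
        apply Finset.card_eq_sum_card_fiberwise
        intro u hu
        have := (Finset.mem_filter.1 (Finset.mem_filter.1 hu).1).1
        exact (Finset.mem_product.1 this).1
      rw [hfib]
      push_cast
      calc (∑ a ∈ Finset.Icc (-(K ε)) (K ε),
            ((T1.filter (fun u => u.1 = a)).card : ℝ))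
          ≤ ∑ a ∈ Finset.Icc (-(K ε)) (K ε), (50:ℝ) := by
            apply Finset.sum_le_sum
            intro a _
            have himg : (T1.filter (fun u => u.1 = a)).card
                = ((T1.filter (fun u => u.1 = a)).image Prod.snd).card := by
              rw [Finset.card_image_of_injOn]
              intro u hu v hv huv
              have hu1 : u.1 = a := (Finset.mem_filter.1 hu).2
              have hv1 : v.1 = a := (Finset.mem_filter.1 hv).2
              exact Prod.ext (hu1.trans hv1.symm) huv
            rw [himg]
            apply column_bound hε0 hsmall a
            intro m hm
            obtain ⟨u, hu, hum⟩ := Finset.mem_image.1 hm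
            have h1 : u.1 = a := (Finset.mem_filter.1 hu).2
            have h2 := Finset.mem_filter.1 (Finset.mem_filter.1 hu).1
            have h3 : u.1^2 ≤ u.2^2 := (Finset.mem_filter.1 (Finset.mem_filter.1 hu).1).2
            have h4 : annCond ε u := (Finset.mem_filter.1 h2.1).2
            have : u = (a, m) := Prod.ext h1 hum
            rw [this] at h3 h4
            exact ⟨h4, h3⟩
          _ = 50 * ((Finset.Icc (-(K ε)) (K ε)).card : ℝ) := by
            rw [Finset.sum_const]; push_cast; ring
    have hT2card : T2.card ≤ T1.card := by
      apply Finset.card_le_card_of_injOn Prod.swap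
      · intro u hu
        obtain ⟨huT, hoct⟩ := Finset.mem_filter.1 hu
        obtain ⟨hbox, hann⟩ := Finset.mem_filter.1 huT
        obtain ⟨hm1, hm2⟩ := Finset.mem_product.1 hbox
        refine Finset.mem_filter.2 ⟨Finset.mem_filter.2 ⟨?_, ?_⟩, ?_⟩
        · exact Finset.mem_product.2 ⟨hm2, hm1⟩
        · rw [annCond, g_swap]; exact hann
        · exact hoct
      · intro u _ v _ huv
        exact Prod.swap_injective huv
    have hIcc := card_Icc_K hε0 hε2
    have : ((T ε).card : ℝ) ≤ (T1.card : ℝ) + (T2.card : ℝ) := by exact_mod_cast hsplit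
    have h2 : (T2.card : ℝ) ≤ (T1.card : ℝ) := by exact_mod_cast hT2card
    have hfin : ((T ε).card : ℝ) ≤ 100 * (14/ε) := by
      nlinarith
    calc ((T ε).card : ℝ) ≤ 100 * (14/ε) := hfin
      _ ≤ 2000/ε := by
          have e1 : (100:ℝ)*(14/ε) = 1400/ε := by ring
          have e2 : (2000:ℝ)/ε - 1400/ε = 600/ε := by ring
          have e3 : (0:ℝ) ≤ 600/ε := by positivity
          linarith
  · -- trivial bound
    have hsub : (T ε).card ≤ (box ε).card := Finset.card_le_card (Finset.filter_subset _ _)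
    have hbox : ((box ε).card : ℝ) = ((Finset.Icc (-(K ε)) (K ε)).card : ℝ)^2 := by
      rw [box, Finset.card_product]; push_cast; ring
    have hIcc := card_Icc_K hε0 hε2
    have hIcc0 : (0:ℝ) ≤ ((Finset.Icc (-(K ε)) (K ε)).card : ℝ) := by positivity
    have h5 : (1:ℝ)/ε ≤ 5 := by
      rw [div_le_iff₀ hε0]; linarith
    have : ((T ε).card : ℝ) ≤ (14/ε)^2 := by
      calc ((T ε).card : ℝ) ≤ ((box ε).card : ℝ) := by exact_mod_cast hsub
        _ = ((Finset.Icc (-(K ε)) (K ε)).card : ℝ)^2 := hbox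
        _ ≤ (14/ε)^2 := by nlinarith
    calc ((T ε).card : ℝ) ≤ (14/ε)^2 := this
      _ = 196 * (1/ε) * (1/ε) := by ring
      _ ≤ 196 * (1/ε) * 5 := by
          have : (0:ℝ) ≤ 196 * (1/ε) := by positivity
          nlinarith
      _ ≤ 2000/ε := by
          have e1 : (196:ℝ)*(1/ε)*5 = 980/ε := by ring
          have e2 : (2000:ℝ)/ε - 980/ε = 1020/ε := by ring
          have e3 : (0:ℝ) ≤ 1020/ε := by positivity
          linarith

def cell (ε : ℝ) (y : EuclideanSpace ℝ (Fin 2)) : ℤ × ℤ :=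
  (⌊y 0 / (ε/2)⌋, ⌊y 1 / (ε/2)⌋)

lemma floor_mul_close {s : ℝ} (hs : 0 < s) (a : ℝ) : |s * ⌊a / s⌋ - a| ≤ s := by
  have h1 : (⌊a / s⌋ : ℝ) ≤ a / s := Int.floor_le _
  have h2 : a / s < ⌊a / s⌋ + 1 := Int.lt_floor_add_one _
  have e : s * (a/s) = a := by field_simp
  have h1' : s * (⌊a / s⌋ : ℝ) ≤ a := by
    have := mul_le_mul_of_nonneg_left h1 hs.le
    rwa [e] at this
  have h2' : a < s * (⌊a / s⌋ : ℝ) + s := by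
    have := mul_lt_mul_of_pos_left h2 hs
    rw [e] at this; linarith [this]
  rw [abs_le]; constructor <;> linarith

lemma same_floor_close {s : ℝ} (hs : 0 < s) {a b : ℝ} (h : ⌊a / s⌋ = ⌊b / s⌋) :
    |a - b| ≤ s := by
  have h1 : (⌊a / s⌋ : ℝ) ≤ a / s := Int.floor_le _
  have h2 : a / s < ⌊a / s⌋ + 1 := Int.lt_floor_add_one _
  have h3 : (⌊b / s⌋ : ℝ) ≤ b / s := Int.floor_le _
  have h4 : b / s < ⌊b / s⌋ + 1 := Int.lt_floor_add_one _
  rw [h] at h1 h2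
  have : |a/s - b/s| ≤ 1 := by rw [abs_le]; constructor <;> linarith
  have e : a/s - b/s = (a-b)/s := by ring
  rw [e, abs_div, abs_of_pos hs, div_le_one hs] at this
  linarith [this]

lemma same_cell {ε : ℝ} (hε0 : 0 < ε) {y z : EuclideanSpace ℝ (Fin 2)}
    (h : cell ε y = cell ε z) : ‖y - z‖ ≤ ε := by
  have hs : (0:ℝ) < ε/2 := by positivity
  have h0 : |y 0 - z 0| ≤ ε/2 := same_floor_close hs (congrArg Prod.fst h)
  have h1 : |y 1 - z 1| ≤ ε/2 := same_floor_close hs (congrArg Prod.snd h)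
  rw [EuclideanSpace.norm_eq]
  have e0 : (y - z) 0 = y 0 - z 0 := by simp
  have e1 : (y - z) 1 = y 1 - z 1 := by simp
  rw [Fin.sum_univ_two, e0, e1]
  have : ‖y 0 - z 0‖^2 + ‖y 1 - z 1‖^2 ≤ ε^2 := by
    rw [Real.norm_eq_abs, Real.norm_eq_abs]
    nlinarith [abs_nonneg (y 0 - z 0), abs_nonneg (y 1 - z 1), sq_abs (y 0 - z 0),
      sq_abs (y 1 - z 1)]
  calc Real.sqrt (‖y 0 - z 0‖^2 + ‖y 1 - z 1‖^2) ≤ Real.sqrt (ε^2) :=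
        Real.sqrt_le_sqrt this
    _ = ε := Real.sqrt_sq hε0.le

lemma cell_ann {ε : ℝ} (hε0 : 0 < ε) {y z : EuclideanSpace ℝ (Fin 2)}
    (hfar : 1 - ε ≤ ‖z - y‖) (hnear : ‖z - y‖ ≤ 1) :
    annCond ε (cell ε z - cell ε y) := by
  have hs : (0:ℝ) < ε/2 := by positivity
  set u : ℤ × ℤ := cell ε z - cell ε y with hu
  set W : EuclideanSpace ℝ (Fin 2) :=
    (WithLp.equiv 2 (Fin 2 → ℝ)).symm ![ε/2*u.1, ε/2*u.2] with hW
  have hW0 : W 0 = ε/2*u.1 := rfl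
  have hW1 : W 1 = ε/2*u.2 := rfl
  have hWnorm : ‖W‖^2 = g ε u := by
    rw [EuclideanSpace.norm_eq, Fin.sum_univ_two, hW0, hW1,
      Real.sq_sqrt (by positivity)]
    simp only [Real.norm_eq_abs]
    rw [show |ε/2*(u.1:ℝ)|^2 = (ε/2*(u.1:ℝ))^2 from sq_abs _,
      show |ε/2*(u.2:ℝ)|^2 = (ε/2*(u.2:ℝ))^2 from sq_abs _]
    rfl
  have hd0 : |W 0 - (z - y) 0| ≤ ε := by
    have e : W 0 - (z - y) 0 = (ε/2 * ⌊z 0 / (ε/2)⌋ - z 0) - (ε/2 * ⌊y 0 / (ε/2)⌋ - y 0) := by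
      rw [hW0]
      have : (u.1 : ℝ) = (⌊z 0 / (ε/2)⌋ : ℝ) - (⌊y 0 / (ε/2)⌋ : ℝ) := by
        rw [hu]; push_cast [cell, Prod.fst_sub, Prod.snd_sub]; ring
      simp only [this, PiLp.sub_apply]
      ring
    rw [e]
    calc |(ε/2 * ⌊z 0 / (ε/2)⌋ - z 0) - (ε/2 * ⌊y 0 / (ε/2)⌋ - y 0)|
        ≤ |ε/2 * ⌊z 0 / (ε/2)⌋ - z 0| + |ε/2 * ⌊y 0 / (ε/2)⌋ - y 0| := abs_sub _ _
      _ ≤ ε/2 + ε/2 := add_le_add (floor_mul_close hs _) (floor_mul_close hs _)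
      _ = ε := by ring
  have hd1 : |W 1 - (z - y) 1| ≤ ε := by
    have e : W 1 - (z - y) 1 = (ε/2 * ⌊z 1 / (ε/2)⌋ - z 1) - (ε/2 * ⌊y 1 / (ε/2)⌋ - y 1) := by
      rw [hW1]
      have : (u.2 : ℝ) = (⌊z 1 / (ε/2)⌋ : ℝ) - (⌊y 1 / (ε/2)⌋ : ℝ) := by
        rw [hu]; push_cast [cell, Prod.fst_sub, Prod.snd_sub]; ring
      simp only [this, PiLp.sub_apply]
      ring
    rw [e]
    calc |(ε/2 * ⌊z 1 / (ε/2)⌋ - z 1) - (ε/2 * ⌊y 1 / (ε/2)⌋ - y 1)|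
        ≤ |ε/2 * ⌊z 1 / (ε/2)⌋ - z 1| + |ε/2 * ⌊y 1 / (ε/2)⌋ - y 1| := abs_sub _ _
      _ ≤ ε/2 + ε/2 := add_le_add (floor_mul_close hs _) (floor_mul_close hs _)
      _ = ε := by ring
  have hclose : ‖W - (z - y)‖ ≤ 3/2*ε := by
    rw [EuclideanSpace.norm_eq, Fin.sum_univ_two]
    have e0 : (W - (z - y)) 0 = W 0 - (z - y) 0 := by simp
    have e1 : (W - (z - y)) 1 = W 1 - (z - y) 1 := by simp
    rw [e0, e1]
    have hsum : ‖W 0 - (z - y) 0‖^2 + ‖W 1 - (z - y) 1‖^2 ≤ (3/2*ε)^2 := by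
      rw [Real.norm_eq_abs, Real.norm_eq_abs, sq_abs, sq_abs]
      nlinarith [sq_abs (W 0 - (z - y) 0), sq_abs (W 1 - (z - y) 1),
        abs_nonneg (W 0 - (z - y) 0), abs_nonneg (W 1 - (z - y) 1)]
    calc Real.sqrt (‖W 0 - (z - y) 0‖^2 + ‖W 1 - (z - y) 1‖^2)
        ≤ Real.sqrt ((3/2*ε)^2) := Real.sqrt_le_sqrt hsum
      _ = 3/2*ε := Real.sqrt_sq (by positivity)
  have htri := abs_norm_sub_norm_le W (z - y)
  have htri' : |‖W‖ - ‖z - y‖| ≤ 3/2*ε := le_trans htri hclose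
  rw [abs_le] at htri'
  constructor
  · rw [← hWnorm]
    have hWlb : max (1 - 5/2*ε) 0 ≤ ‖W‖ := by
      apply max_le
      · linarith [htri'.1]
      · exact norm_nonneg _
    exact pow_le_pow_left₀ (le_max_right _ _) hWlb 2
  · rw [← hWnorm]
    have hWub : ‖W‖ ≤ 1 + 3/2*ε := by linarith [htri'.2]
    exact pow_le_pow_left₀ (norm_nonneg _) hWub 2
theorem final :
    ∃ c : ℝ, 0 < c ∧
      ∀ (ε : ℝ), 0 < ε → ε < 1 / 2 →
        ∀ (n : ℕ) (x : Fin n → EuclideanSpace ℝ (Fin 2)),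
          (∀ i j, ‖x i - x j‖ ≤ 1) →
          c * ε * ({p : Fin n × Fin n | 1 - ε ≤ ‖x p.1 - x p.2‖}.ncard : ℝ) ≤
            ({p : Fin n × Fin n | ‖x p.1 - x p.2‖ ≤ ε}.ncard : ℝ) := by
  refine ⟨1/2000, by norm_num, ?_⟩
  intro ε hε0 hε2 n x hdiam
  set f : Fin n → ℤ × ℤ := fun i => cell ε (x i) with hf
  set t : Finset (ℤ × ℤ) := Finset.univ.image f with ht
  set fib : ℤ × ℤ → Finset (Fin n) := fun v => Finset.univ.filter (fun i => f i = v) with hfib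
  set SA : Finset (Fin n × Fin n) :=
    Finset.univ.filter (fun p : Fin n × Fin n => 1 - ε ≤ ‖x p.1 - x p.2‖) with hSA
  set SN : Finset (Fin n × Fin n) :=
    Finset.univ.filter (fun p : Fin n × Fin n => ‖x p.1 - x p.2‖ ≤ ε) with hSN
  set D : Finset ((ℤ × ℤ) × (ℤ × ℤ)) :=
    (t ×ˢ t).filter (fun q => annCond ε (q.2 - q.1)) with hD
  -- ncard conversions
  have hncA : ({p : Fin n × Fin n | 1 - ε ≤ ‖x p.1 - x p.2‖}.ncard : ℝ) = (SA.card : ℝ) := by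
    congr 1
    rw [hSA, ← Set.ncard_coe_finset]
    congr 1
    ext p; simp
  have hncN : ({p : Fin n × Fin n | ‖x p.1 - x p.2‖ ≤ ε}.ncard : ℝ) = (SN.card : ℝ) := by
    congr 1
    rw [hSN, ← Set.ncard_coe_finset]
    congr 1
    ext p; simp
  rw [hncA, hncN]
  -- Step 1 : neighbors dominate sum of squares of fiber sizes
  have hQ1 : (∑ v ∈ t, ((fib v).card : ℝ)^2) ≤ (SN.card : ℝ) := by
    set Sdiag : Finset (Fin n × Fin n) :=
      Finset.univ.filter (fun p : Fin n × Fin n => f p.1 = f p.2) with hSdiag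
    have hsub : Sdiag ⊆ SN := by
      intro p hp
      have hp' : f p.1 = f p.2 := (Finset.mem_filter.1 hp).2
      exact Finset.mem_filter.2 ⟨Finset.mem_univ _, same_cell hε0 hp'⟩
    have hcard : Sdiag.card = ∑ v ∈ t, (fib v).card * (fib v).card := by
      rw [Finset.card_eq_sum_card_fiberwise
        (f := fun p : Fin n × Fin n => f p.1) (t := t)
        (fun p _ => Finset.mem_image.2 ⟨p.1, Finset.mem_univ _, rfl⟩)]
      apply Finset.sum_congr rfl
      intro v _
      have : Sdiag.filter (fun p => f p.1 = v) = (fib v) ×ˢ (fib v) := by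
        ext p
        simp only [hSdiag, hfib, Finset.mem_filter, Finset.mem_product, Finset.mem_univ,
          true_and, Finset.mem_univ]
        constructor
        · rintro ⟨h1, h2⟩; exact ⟨h2, h1 ▸ h2⟩
        · rintro ⟨h1, h2⟩; exact ⟨h1.trans h2.symm, h1⟩
      rw [this, Finset.card_product]
    have : (Sdiag.card : ℝ) ≤ (SN.card : ℝ) := by exact_mod_cast Finset.card_le_card hsub
    rw [hcard] at this
    push_cast at this
    calc (∑ v ∈ t, ((fib v).card : ℝ)^2) = ∑ v ∈ t, ((fib v).card : ℝ) * ((fib v).card : ℝ) := by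
          apply Finset.sum_congr rfl; intro v _; ring
      _ ≤ (SN.card : ℝ) := this
  -- Step 2 : antipodes bounded by sum over D
  have hQ2 : (SA.card : ℝ) ≤ ∑ q ∈ D, ((fib q.1).card : ℝ) * ((fib q.2).card : ℝ) := by
    have hcard : SA.card = ∑ q ∈ D, (SA.filter (fun p => (f p.1, f p.2) = q)).card := by
      apply Finset.card_eq_sum_card_fiberwise
      intro p hp
      have hp' : 1 - ε ≤ ‖x p.1 - x p.2‖ := (Finset.mem_filter.1 hp).2
      refine Finset.mem_filter.2 ⟨Finset.mem_product.2 ⟨?_, ?_⟩, ?_⟩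
      · exact Finset.mem_image.2 ⟨p.1, Finset.mem_univ _, rfl⟩
      · exact Finset.mem_image.2 ⟨p.2, Finset.mem_univ _, rfl⟩
      · show annCond ε (f p.2 - f p.1)
        apply cell_ann hε0
        · rwa [norm_sub_rev]
        · exact hdiam _ _
    have hfiber : ∀ q ∈ D, ((SA.filter (fun p => (f p.1, f p.2) = q)).card : ℝ)
        ≤ ((fib q.1).card : ℝ) * ((fib q.2).card : ℝ) := by
      intro q _
      have hsub2 : SA.filter (fun p => (f p.1, f p.2) = q) ⊆ (fib q.1) ×ˢ (fib q.2) := by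
        intro p hp
        have hp' : (f p.1, f p.2) = q := (Finset.mem_filter.1 hp).2
        refine Finset.mem_product.2 ⟨?_, ?_⟩
        · exact Finset.mem_filter.2 ⟨Finset.mem_univ _, by rw [← hp']⟩
        · exact Finset.mem_filter.2 ⟨Finset.mem_univ _, by rw [← hp']⟩
      calc ((SA.filter (fun p => (f p.1, f p.2) = q)).card : ℝ)
          ≤ (((fib q.1) ×ˢ (fib q.2)).card : ℝ) := by
            exact_mod_cast Finset.card_le_card hsub2
        _ = ((fib q.1).card : ℝ) * ((fib q.2).card : ℝ) := by
            rw [Finset.card_product]; push_cast; ring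
    calc (SA.card : ℝ) = ∑ q ∈ D, ((SA.filter (fun p => (f p.1, f p.2) = q)).card : ℝ) := by
          rw [hcard]; push_cast; ring
      _ ≤ ∑ q ∈ D, ((fib q.1).card : ℝ) * ((fib q.2).card : ℝ) :=
          Finset.sum_le_sum hfiber
  -- Step 3 : symmetry of D and AM-GM
  have hswapD : ∀ q ∈ D, q.swap ∈ D := by
    intro q hq
    obtain ⟨hq1, hq2⟩ := Finset.mem_filter.1 hq
    obtain ⟨ha, hb⟩ := Finset.mem_product.1 hq1
    refine Finset.mem_filter.2 ⟨Finset.mem_product.2 ⟨hb, ha⟩, ?_⟩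
    show annCond ε (q.1 - q.2)
    have : q.1 - q.2 = -(q.2 - q.1) := by ring
    rw [this, annCond, g_neg]
    exact hq2
  have hsym : ∑ q ∈ D, ((fib q.2).card : ℝ)^2 = ∑ q ∈ D, ((fib q.1).card : ℝ)^2 := by
    apply Finset.sum_nbij' (i := fun q => q.swap) (j := fun q => q.swap)
    · exact hswapD
    · exact hswapD
    · intro q _; exact Prod.swap_swap q
    · intro q _; exact Prod.swap_swap q
    · intro q _; rfl
  have hAM : ∑ q ∈ D, ((fib q.1).card : ℝ) * ((fib q.2).card : ℝ)
      ≤ ∑ q ∈ D, ((fib q.1).card : ℝ)^2 := by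
    have h1 : ∑ q ∈ D, ((fib q.1).card : ℝ) * ((fib q.2).card : ℝ)
        ≤ ∑ q ∈ D, (((fib q.1).card : ℝ)^2 + ((fib q.2).card : ℝ)^2)/2 := by
      apply Finset.sum_le_sum
      intro q _
      nlinarith [sq_nonneg (((fib q.1).card : ℝ) - ((fib q.2).card : ℝ))]
    calc ∑ q ∈ D, ((fib q.1).card : ℝ) * ((fib q.2).card : ℝ)
        ≤ ∑ q ∈ D, (((fib q.1).card : ℝ)^2 + ((fib q.2).card : ℝ)^2)/2 := h1
      _ = (∑ q ∈ D, ((fib q.1).card : ℝ)^2 + ∑ q ∈ D, ((fib q.2).card : ℝ)^2)/2 := by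
          rw [← Finset.sum_add_distrib, ← Finset.sum_div]
      _ = ∑ q ∈ D, ((fib q.1).card : ℝ)^2 := by rw [hsym]; ring
  -- Step 4 : rewrite as a sum over cells with multiplicities
  have hdeg : ∑ q ∈ D, ((fib q.1).card : ℝ)^2
      = ∑ v ∈ t, ((fib v).card : ℝ)^2 * ((t.filter (fun w => annCond ε (w - v))).card : ℝ) := by
    rw [hD, Finset.sum_filter, Finset.sum_product]
    apply Finset.sum_congr rfl
    intro v _
    rw [← Finset.sum_filter]
    calc (∑ a ∈ t.filter (fun a => annCond ε ((v, a).2 - (v, a).1)), ((fib (v,a).1).card:ℝ)^2)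
        = ∑ a ∈ t.filter (fun w => annCond ε (w - v)), ((fib v).card:ℝ)^2 := rfl
      _ = ((fib v).card : ℝ)^2 * ((t.filter (fun w => annCond ε (w - v))).card : ℝ) := by
          rw [Finset.sum_const]
          simp only [nsmul_eq_mul]
          ring
  -- Step 5 : multiplicity bound
  have hcnt : ∀ v ∈ t, ((t.filter (fun w => annCond ε (w - v))).card : ℝ) ≤ 2000/ε := by
    intro v _
    have hinj : (t.filter (fun w => annCond ε (w - v))).card ≤ (T ε).card := by
      apply Finset.card_le_card_of_injOn (fun w => w - v)
      · intro w hw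
        have hann : annCond ε (w - v) := (Finset.mem_filter.1 hw).2
        refine Finset.mem_filter.2 ⟨?_, hann⟩
        have hub := hann.2
        have habs_of_sq : ∀ b c : ℝ, 0 ≤ c → b^2 ≤ c^2 → |b| ≤ c := by
          intro b c hc h
          rw [← Real.sqrt_sq_eq_abs, ← Real.sqrt_sq hc]
          exact Real.sqrt_le_sqrt h
        have hK : (4:ℝ)/ε ≤ (K ε : ℝ) := Int.le_ceil _
        have hbound : ∀ m : ℤ, (ε/2*(m:ℝ))^2 ≤ (1 + 3/2*ε)^2 → -(K ε) ≤ m ∧ m ≤ K ε := by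
          intro m hm
          have h1 : |ε/2*(m:ℝ)| ≤ 1 + 3/2*ε := habs_of_sq _ _ (by linarith) hm
          rw [abs_mul, abs_of_pos (by positivity : (0:ℝ) < ε/2)] at h1
          have h2 : |(m:ℝ)| ≤ 4/ε := by
            rw [le_div_iff₀ hε0]
            have e : |(m:ℝ)| * ε = ε/2 * |(m:ℝ)| * 2 := by ring
            rw [e]; linarith
          have h3 : |(m:ℝ)| ≤ (K ε : ℝ) := le_trans h2 hK
          rw [abs_le] at h3
          exact ⟨by exact_mod_cast h3.1, by exact_mod_cast h3.2⟩
        unfold g at hub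
        have hb1 := hbound (w - v).1 (by nlinarith [sq_nonneg (ε/2*(((w - v).2 : ℤ) : ℝ))])
        have hb2 := hbound (w - v).2 (by nlinarith [sq_nonneg (ε/2*(((w - v).1 : ℤ) : ℝ))])
        exact Finset.mem_product.2 ⟨Finset.mem_Icc.2 hb1, Finset.mem_Icc.2 hb2⟩
      · intro a _ b _ hab
        exact sub_left_injective hab
    calc ((t.filter (fun w => annCond ε (w - v))).card : ℝ) ≤ ((T ε).card : ℝ) := by
          exact_mod_cast hinj
      _ ≤ 2000/ε := card_T hε0 hε2
  -- Final assembly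
  have hfinal : (SA.card : ℝ) ≤ (2000/ε) * (SN.card : ℝ) := by
    calc (SA.card : ℝ) ≤ ∑ q ∈ D, ((fib q.1).card : ℝ) * ((fib q.2).card : ℝ) := hQ2
      _ ≤ ∑ q ∈ D, ((fib q.1).card : ℝ)^2 := hAM
      _ = ∑ v ∈ t, ((fib v).card : ℝ)^2 * ((t.filter (fun w => annCond ε (w - v))).card : ℝ) :=
          hdeg
      _ ≤ ∑ v ∈ t, ((fib v).card : ℝ)^2 * (2000/ε) := by
          apply Finset.sum_le_sum
          intro v hv
          exact mul_le_mul_of_nonneg_left (hcnt v hv) (sq_nonneg _)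
      _ = (2000/ε) * ∑ v ∈ t, ((fib v).card : ℝ)^2 := by
          rw [← Finset.sum_mul]; ring
      _ ≤ (2000/ε) * (SN.card : ℝ) := by
          apply mul_le_mul_of_nonneg_left hQ1 (by positivity)
  have hε' : (0:ℝ) < ε/2000 := by positivity
  have := mul_le_mul_of_nonneg_left hfinal hε'.le
  calc (1:ℝ)/2000 * ε * (SA.card : ℝ) = ε/2000 * (SA.card : ℝ) := by ring
    _ ≤ ε/2000 * ((2000/ε) * (SN.card : ℝ)) := this
    _ = (SN.card : ℝ) := by field_simp
end
end AntipodeAux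

/-- There is a universal constant `c > 0` such that for every `0 < ε < 1/2` and every
family of points in the plane of diameter at most `1`, the number of ordered pairs at
distance `≤ ε` is at least `c · ε` times the number of ordered pairs at distance `≥ 1 - ε`. -/
theorem many_antipodes_implies_many_neighbors_easy :
    ∃ c : ℝ, 0 < c ∧
      ∀ (ε : ℝ), 0 < ε → ε < 1 / 2 →
        ∀ (n : ℕ) (x : Fin n → EuclideanSpace ℝ (Fin 2)),
          (∀ i j, ‖x i - x j‖ ≤ 1) →
          c * ε * ({p : Fin n × Fin n | 1 - ε ≤ ‖x p.1 - x p.2‖}.ncard : ℝ) ≤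
            ({p : Fin n × Fin n | ‖x p.1 - x p.2‖ ≤ ε}.ncard : ℝ) :=
  AntipodeAux.final
end

section
/- Let Ω ⊆ ℝ² be a convex set with diameter ≤ 1, let ε > 0, and let x ∈ Ω be a point whose distance to the frontier (topological boundary) of Ω is strictly greater than ε. Then for every y ∈ Ω one has ‖x − y‖ < 1 − ε. -/
/-!
The ball of radius `infDist x (frontier Ω)` about `x` is connected and misses the frontier, so it
lies in `Ω`. Moving `x` away from `y` by almost that radius therefore stays in `Ω`, and the
diameter bound applied to the moved point and `y` gives the estimate.
-/

open Metric Set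

theorem IsPreconnected.subset_of_disjoint_frontier {X : Type*} [TopologicalSpace X]
    {s t : Set X} (ht : IsPreconnected t) (hts : Disjoint t (frontier s))
    (hne : (t ∩ s).Nonempty) : t ⊆ s := by
  have hcover : t ⊆ interior s ∪ (closure s)ᶜ := fun p hp ↦ by
    by_contra h
    simp only [mem_union, mem_compl_iff, not_or, not_not] at h
    exact hts.notMem_of_mem_left hp ⟨h.2, h.1⟩
  obtain ⟨p, hpt, hps⟩ := hne
  have hp_int : p ∈ interior s := (hcover hpt).resolve_right (not_not.mpr (subset_closure hps))
  exact (ht.subset_left_of_subset_union isOpen_interior isClosed_closure.isOpen_compl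
    (disjoint_compl_right.mono_right (compl_subset_compl.mpr interior_subset_closure))
    hcover ⟨p, hpt, hp_int⟩).trans interior_subset

section NormedSpace

variable {E : Type*} [NormedAddCommGroup E] [NormedSpace ℝ E]

theorem Metric.ball_infDist_frontier_subset {s : Set E} {x : E} (hx : x ∈ s) :
    ball x (infDist x (frontier s)) ⊆ s := by
  rcases le_or_gt (infDist x (frontier s)) 0 with hd | hd
  · simp [ball_eq_empty.mpr hd]
  exact (convex_ball x _).isPreconnected.subset_of_disjoint_frontier
    (subset_compl_iff_disjoint_right.mp ball_infDist_subset_compl) ⟨x, mem_ball_self hd, hx⟩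

theorem exists_norm_eq_one_smul_eq [Nontrivial E] (v : E) : ∃ u : E, ‖u‖ = 1 ∧ ‖v‖ • u = v := by
  rcases eq_or_ne v 0 with rfl | hv
  · obtain ⟨u, hu⟩ := exists_norm_eq E zero_le_one
    exact ⟨u, hu, by simp⟩
  · exact ⟨‖v‖⁻¹ • v, by simp [norm_smul, hv], by simp [smul_smul, hv]⟩

/-- The point at distance `r` from `x` on the ray from `y` through `x` lies in `s`. -/
theorem dist_add_le_of_closedBall_subset [Nontrivial E] {s : Set E} {x y : E} {r D : ℝ}
    (hr : 0 ≤ r) (hball : closedBall x r ⊆ s) (hdiam : ∀ p ∈ s, ∀ q ∈ s, dist p q ≤ D)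
    (hy : y ∈ s) : dist x y + r ≤ D := by
  obtain ⟨u, hu, hxy⟩ := exists_norm_eq_one_smul_eq (x - y)
  have hz : x + r • u ∈ s := hball <| by
    simp [dist_eq_norm, norm_smul, hu, abs_of_nonneg hr]
  have hzy : x + r • u - y = (‖x - y‖ + r) • u := by
    rw [add_smul, hxy]; abel
  have := hdiam _ hz y hy
  rwa [dist_eq_norm, hzy, norm_smul, hu, mul_one, Real.norm_of_nonneg (by positivity),
    ← dist_eq_norm] at this

end NormedSpace

theorem deep_points_are_not_antipodal_general (Ω : Set (EuclideanSpace ℝ (Fin 2)))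
    (hdiam : ∀ p ∈ Ω, ∀ q ∈ Ω, dist p q ≤ 1)
    (ε : ℝ) (hε : 0 < ε) (x : EuclideanSpace ℝ (Fin 2)) (hx : x ∈ Ω)
    (hdeep : ε < Metric.infDist x (frontier Ω)) :
    ∀ y ∈ Ω, ‖x - y‖ < 1 - ε := by
  intro y hy
  set d := infDist x (frontier Ω)
  have hball : closedBall x ((ε + d) / 2) ⊆ Ω :=
    (closedBall_subset_ball (by linarith)).trans (ball_infDist_frontier_subset hx)
  have := dist_add_le_of_closedBall_subset (by linarith) hball hdiam hy
  rw [← dist_eq_norm]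
  linarith

/-- If `Ω ⊆ ℝ²` is convex with diameter `≤ 1` and `x ∈ Ω` has distance `> ε` to the
frontier of `Ω`, then `‖x - y‖ < 1 - ε` for every `y ∈ Ω`. -/
theorem deep_points_are_not_antipodal (Ω : Set (EuclideanSpace ℝ (Fin 2)))
    (hconv : Convex ℝ Ω) (hdiam : ∀ p ∈ Ω, ∀ q ∈ Ω, dist p q ≤ 1)
    (ε : ℝ) (hε : 0 < ε) (x : EuclideanSpace ℝ (Fin 2)) (hx : x ∈ Ω)
    (hdeep : ε < Metric.infDist x (frontier Ω)) :
    ∀ y ∈ Ω, ‖x - y‖ < 1 - ε :=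
  deep_points_are_not_antipodal_general Ω hdiam ε hε x hx hdeep
end

section
/- There exists a universal constant C > 0 with the following property. Let Ω ⊆ ℝ² be a compact convex set with diameter equal to 1, let 0 < ε < 1/1000, and let Ω_ε = {x ∈ Ω : dist(x, ∂Ω) ≤ ε} be the inner ε-collar of Ω. Then the number of grid squares Q_{a,b} = [aε/4, (a+1)ε/4] × [bε/4, (b+1)ε/4], with (a,b) ∈ ℤ², that intersect Ω_ε is at most C/ε. -/
open Metric Set

local notation "E'" => EuclideanSpace ℝ (Fin 2)

private lemma coord_abs_le_dist (x y : E') (i : Fin 2) :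
    |x i - y i| ≤ dist x y := by
  rw [EuclideanSpace.dist_eq]
  rw [show |x i - y i| = Real.sqrt ((x i - y i)^2) from (Real.sqrt_sq_eq_abs _).symm]
  apply Real.sqrt_le_sqrt
  rw [show (x i - y i)^2 = dist (x i) (y i)^2 by rw [Real.dist_eq, sq_abs]]
  exact Finset.single_le_sum (f := fun j => dist (x j) (y j)^2)
    (fun j _ => sq_nonneg _) (Finset.mem_univ i)
private lemma coordE (p q : E') (t : ℝ) (i : Fin 2) :
    ((1-t)•p + t•q) i = (1-t) * p i + t * q i := by
  simp [PiLp.add_apply, PiLp.smul_apply, smul_eq_mul]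

private lemma fillE {Ω : Set E'} (hC : Convex ℝ Ω) {p q w : E'} (hp : p ∈ Ω) (hq : q ∈ Ω)
    {i j : Fin 2} (hij : ∀ k : Fin 2, k = i ∨ k = j)
    (hpj : p j = w j) (hqj : q j = w j) (hqi : q i ≤ w i) (hwi : w i ≤ p i) : w ∈ Ω := by
  rcases eq_or_lt_of_le (hqi.trans hwi) with heq | hlt
  · have : q = w := by
      ext k; rcases hij k with rfl | rfl
      · exact le_antisymm hqi (heq ▸ hwi)
      · exact hqj
    exact this ▸ hq
  · have hden : (0:ℝ) < p i - q i := by linarith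
    have hne : p i - q i ≠ 0 := ne_of_gt hden
    set t := (p i - w i)/(p i - q i) with ht
    have ht0 : 0 ≤ t := div_nonneg (by linarith) hden.le
    have ht1 : t ≤ 1 := by rw [ht, div_le_one hden]; linarith
    have hmem : (1-t)•p + t•q ∈ Ω := hC hp hq (by linarith) ht0 (by ring)
    have : (1-t)•p + t•q = w := by
      ext k; rcases hij k with rfl | rfl
      · rw [coordE, ht]; field_simp; ring
      · rw [coordE, hpj, hqj]; ring
    exact this ▸ hmem

private lemma crossE {Ω : Set E'} (hC : Convex ℝ Ω) {p q : E'} (hp : p ∈ Ω) (hq : q ∈ Ω)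
    (i j : Fin 2) {c : ℝ} (hqi : q i < c) (hpi : c < p i) :
    ∃ w ∈ Ω, w i = c ∧ w j = p j + ((p i - c)/(p i - q i)) * (q j - p j) ∧
      min (p j) (q j) ≤ w j ∧ w j ≤ max (p j) (q j) := by
  have hden : (0:ℝ) < p i - q i := by linarith
  have hne : p i - q i ≠ 0 := ne_of_gt hden
  set t := (p i - c)/(p i - q i) with ht
  have ht0 : 0 ≤ t := div_nonneg (by linarith) hden.le
  have ht1 : t ≤ 1 := by rw [ht, div_le_one hden]; linarith
  refine ⟨(1-t)•p + t•q, hC hp hq (by linarith) ht0 (by ring), ?_, ?_, ?_, ?_⟩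
  · rw [coordE, ht]; field_simp; ring
  · rw [coordE]; ring
  · rw [coordE]
    nlinarith [min_le_left (p j) (q j), min_le_right (p j) (q j)]
  · rw [coordE]
    nlinarith [le_max_left (p j) (q j), le_max_right (p j) (q j)]

private lemma interpA {s A m t r : ℝ} (hr : 0 ≤ r) (hs0 : 0 ≤ s) (hs : s ≤ 1/2)
    (hA : 2*r ≤ A - m) (ht : t - m < r) : t < A + s * (m - A) := by
  nlinarith [mul_nonneg (show (0:ℝ) ≤ 1/2 - s by linarith) (show (0:ℝ) ≤ A - m by linarith)]

private lemma interpB {s B m t r : ℝ} (hr : 0 ≤ r) (hs0 : 0 ≤ s) (hs : s ≤ 1/2)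
    (hB : 2*r ≤ m - B) (ht : m - t < r) : B + s * (m - B) < t := by
  nlinarith [mul_nonneg (show (0:ℝ) ≤ 1/2 - s by linarith) (show (0:ℝ) ≤ m - B by linarith)]

private lemma interpC {s A m t r : ℝ} (hr : 0 ≤ r) (hs : 1/2 ≤ s) (hs1 : s ≤ 1)
    (hA : 2*r ≤ A - m) (ht : t - m < r) : t < m + s * (A - m) := by
  nlinarith [mul_nonneg (show (0:ℝ) ≤ s - 1/2 by linarith) (show (0:ℝ) ≤ A - m by linarith)]

private lemma interpD {s B m t r : ℝ} (hr : 0 ≤ r) (hs : 1/2 ≤ s) (hs1 : s ≤ 1)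
    (hB : 2*r ≤ m - B) (ht : m - t < r) : m + s * (B - m) < t := by
  nlinarith [mul_nonneg (show (0:ℝ) ≤ s - 1/2 by linarith) (show (0:ℝ) ≤ m - B by linarith)]

lemma surrounded_mem_interior {Ω : Set E'} (hC : Convex ℝ Ω) (y z1 z2 z3 z4 : E')
    (h1 : z1 ∈ Ω) (h2 : z2 ∈ Ω) (h3 : z3 ∈ Ω) (h4 : z4 ∈ Ω)
    (a1 : y 0 < z1 0) (b1 : y 1 < z1 1)
    (a2 : y 0 < z2 0) (b2 : z2 1 < y 1)
    (a3 : z3 0 < y 0) (b3 : y 1 < z3 1)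
    (a4 : z4 0 < y 0) (b4 : z4 1 < y 1) :
    y ∈ interior Ω := by
  have fin10 : ∀ k : Fin 2, k = 1 ∨ k = 0 := by decide
  -- the four axis points
  obtain ⟨pr, hprΩ, hpr1, -, hprm, -⟩ := crossE hC h1 h2 1 0 b2 b1
  have hpr0 : y 0 < pr 0 := lt_of_lt_of_le (lt_min a1 a2) hprm
  obtain ⟨pl, hplΩ, hpl1, -, -, hplM⟩ := crossE hC h3 h4 1 0 b4 b3
  have hpl0 : pl 0 < y 0 := lt_of_le_of_lt hplM (max_lt a3 a4)
  obtain ⟨pt, hptΩ, hpt0, -, hptm, -⟩ := crossE hC h1 h3 0 1 a3 a1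
  have hpt1 : y 1 < pt 1 := lt_of_lt_of_le (lt_min b1 b3) hptm
  obtain ⟨pb, hpbΩ, hpb0, -, -, hpbM⟩ := crossE hC h2 h4 0 1 a4 a2
  have hpb1 : pb 1 < y 1 := lt_of_le_of_lt hpbM (max_lt b2 b4)
  -- radius
  obtain ⟨r, hr0, hrr, hrl, hrt, hrb⟩ :
      ∃ r : ℝ, 0 < r ∧ 2 * r ≤ pr 0 - y 0 ∧ 2 * r ≤ y 0 - pl 0 ∧
        2 * r ≤ pt 1 - y 1 ∧ 2 * r ≤ y 1 - pb 1 := by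
    refine ⟨min (min (pr 0 - y 0) (y 0 - pl 0)) (min (pt 1 - y 1) (y 1 - pb 1)) / 2,
      ?_, ?_, ?_, ?_, ?_⟩
    · apply div_pos _ two_pos
      simp only [lt_min_iff]
      exact ⟨⟨by linarith, by linarith⟩, by linarith, by linarith⟩
    · have h := (min_le_left (min (pr 0 - y 0) (y 0 - pl 0)) (min (pt 1 - y 1) (y 1 - pb 1))).trans
        (min_le_left (pr 0 - y 0) (y 0 - pl 0))
      linarith
    · have h := (min_le_left (min (pr 0 - y 0) (y 0 - pl 0)) (min (pt 1 - y 1) (y 1 - pb 1))).trans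
        (min_le_right (pr 0 - y 0) (y 0 - pl 0))
      linarith
    · have h := (min_le_right (min (pr 0 - y 0) (y 0 - pl 0)) (min (pt 1 - y 1) (y 1 - pb 1))).trans
        (min_le_left (pt 1 - y 1) (y 1 - pb 1))
      linarith
    · have h := (min_le_right (min (pr 0 - y 0) (y 0 - pl 0)) (min (pt 1 - y 1) (y 1 - pb 1))).trans
        (min_le_right (pt 1 - y 1) (y 1 - pb 1))
      linarith
  rw [mem_interior]
  refine ⟨{q : E' | |q 0 - y 0| < r ∧ |q 1 - y 1| < r}, ?_, ?_, by simp [abs_of_nonneg, hr0]⟩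
  · -- subset of Ω
    rintro q ⟨hq0, hq1⟩
    rw [abs_lt] at hq0 hq1
    rcases lt_trichotomy (q 0) (y 0) with hlt | heq | hgt
    · -- use pt/pb with pl
      have hplq : pl 0 < q 0 := by linarith
      have hptq : q 0 < pt 0 := by rw [hpt0]; exact hlt
      have hpbq : q 0 < pb 0 := by rw [hpb0]; exact hlt
      obtain ⟨U, hUΩ, hU0, hU1f, -, -⟩ := crossE hC hptΩ hplΩ 0 1 hplq hptq
      obtain ⟨D, hDΩ, hD0, hD1f, -, -⟩ := crossE hC hpbΩ hplΩ 0 1 hplq hpbq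
      have hdenU : 0 < pt 0 - pl 0 := by linarith
      have hdenD : 0 < pb 0 - pl 0 := by linarith
      have hsU : (pt 0 - q 0)/(pt 0 - pl 0) ≤ 1/2 := by
        rw [div_le_iff₀ hdenU, hpt0]; linarith
      have hsU0 : 0 ≤ (pt 0 - q 0)/(pt 0 - pl 0) := div_nonneg (by linarith) hdenU.le
      have hsD : (pb 0 - q 0)/(pb 0 - pl 0) ≤ 1/2 := by
        rw [div_le_iff₀ hdenD, hpb0]; linarith
      have hsD0 : 0 ≤ (pb 0 - q 0)/(pb 0 - pl 0) := div_nonneg (by linarith) hdenD.le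
      have hU1 : q 1 < U 1 := by
        rw [hU1f, hpl1]
        exact interpA hr0.le hsU0 hsU hrt (by linarith)
      have hD1 : D 1 < q 1 := by
        rw [hD1f, hpl1]
        exact interpB hr0.le hsD0 hsD hrb (by linarith)
      exact fillE hC hUΩ hDΩ fin10 hU0 hD0 hD1.le hU1.le
    · -- vertical segment through pt, pb
      refine fillE hC hptΩ hpbΩ fin10 (by rw [hpt0, heq]) (by rw [hpb0, heq]) ?_ ?_
      · linarith
      · linarith
    · -- use pt/pb with pr
      have hprq : q 0 < pr 0 := by linarith
      have hptq : pt 0 < q 0 := by rw [hpt0]; exact hgt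
      have hpbq : pb 0 < q 0 := by rw [hpb0]; exact hgt
      obtain ⟨U, hUΩ, hU0, hU1f, -, -⟩ := crossE hC hprΩ hptΩ 0 1 hptq hprq
      obtain ⟨D, hDΩ, hD0, hD1f, -, -⟩ := crossE hC hprΩ hpbΩ 0 1 hpbq hprq
      have hdenU : 0 < pr 0 - pt 0 := by linarith
      have hdenD : 0 < pr 0 - pb 0 := by linarith
      have hsU : 1/2 ≤ (pr 0 - q 0)/(pr 0 - pt 0) := by
        rw [le_div_iff₀ hdenU, hpt0]; linarith
      have hsU1 : (pr 0 - q 0)/(pr 0 - pt 0) ≤ 1 := by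
        rw [div_le_one hdenU, hpt0]; linarith
      have hsD : 1/2 ≤ (pr 0 - q 0)/(pr 0 - pb 0) := by
        rw [le_div_iff₀ hdenD, hpb0]; linarith
      have hsD1 : (pr 0 - q 0)/(pr 0 - pb 0) ≤ 1 := by
        rw [div_le_one hdenD, hpb0]; linarith
      have hU1 : q 1 < U 1 := by
        rw [hU1f, hpr1]
        exact interpC hr0.le hsU hsU1 hrt (by linarith)
      have hD1 : D 1 < q 1 := by
        rw [hD1f, hpr1]
        exact interpD hr0.le hsD hsD1 hrb (by linarith)
      exact fillE hC hUΩ hDΩ fin10 hU0 hD0 hD1.le hU1.le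
  · -- openness
    have heq : {q : E' | |q 0 - y 0| < r ∧ |q 1 - y 1| < r}
        = (fun q : E' => q 0) ⁻¹' (Metric.ball (y 0) r) ∩ (fun q : E' => q 1) ⁻¹' (Metric.ball (y 1) r) := by
      ext q; simp [Real.dist_eq, Metric.mem_ball]
    rw [heq]
    exact ((Metric.isOpen_ball).preimage (by fun_prop)).inter
      ((Metric.isOpen_ball).preimage (by fun_prop))
private lemma floor_sep {δ u v : ℝ} (hδ : 0 < δ) (h : ⌊u/δ⌋ < ⌊v/δ⌋) : u < v := by
  have h1 : u/δ < v/δ := by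
    calc u/δ < (⌊u/δ⌋ : ℝ) + 1 := Int.lt_floor_add_one _
    _ ≤ (⌊v/δ⌋ : ℝ) := by exact_mod_cast h
    _ ≤ v/δ := Int.floor_le _
  calc u = (u/δ)*δ := by field_simp
  _ < (v/δ)*δ := by exact mul_lt_mul_of_pos_right h1 hδ
  _ = v := by field_simp

private lemma floor_close {δ u v : ℝ} (hδ : 0 < δ) (h : |u - v| ≤ 1) :
    |⌊u/δ⌋ - ⌊v/δ⌋| ≤ ⌊1/δ⌋ + 1 := by
  rw [abs_le] at h
  have key : ∀ w z : ℝ, w - z ≤ 1 → ⌊w/δ⌋ - ⌊z/δ⌋ ≤ ⌊1/δ⌋ + 1 := by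
    intro w z hwz
    have h1 : w/δ ≤ z/δ + 1/δ := by
      have : w/δ ≤ (z+1)/δ := by gcongr; linarith
      linarith [this, (by ring : (z+1)/δ = z/δ + 1/δ)]
    have h2 : w/δ < ((⌊z/δ⌋ + ⌊1/δ⌋ + 2 : ℤ) : ℝ) := by
      push_cast
      have := Int.lt_floor_add_one (z/δ)
      have := Int.lt_floor_add_one (1/δ)
      linarith
    have := Int.floor_lt.mpr h2
    omega
  have k1 := key u v (by linarith)
  have k2 := key v u (by linarith)
  rw [abs_le]; omega

/-- Counting lemma: cells hit by a bounded staircase set. -/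
private lemma cell_staircase {δ : ℝ} (hδ : 0 < δ) (A : Set E')
    (hbdd : ∀ y ∈ A, ∀ y' ∈ A, |y 0 - y' 0| ≤ 1 ∧ |y 1 - y' 1| ≤ 1)
    (hanti : (∀ y ∈ A, ∀ y' ∈ A, ¬(y 0 < y' 0 ∧ y 1 < y' 1)) ∨
             (∀ y ∈ A, ∀ y' ∈ A, ¬(y 0 < y' 0 ∧ y' 1 < y 1))) :
    ((fun y : E' => (⌊y 0/δ⌋, ⌊y 1/δ⌋)) '' A).Finite ∧
      (((fun y : E' => (⌊y 0/δ⌋, ⌊y 1/δ⌋)) '' A).ncard : ℝ) ≤ 4/δ + 5 := by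
  set cell : E' → ℤ × ℤ := fun y => (⌊y 0/δ⌋, ⌊y 1/δ⌋) with hcell
  rcases A.eq_empty_or_nonempty with rfl | ⟨y₀, hy₀⟩
  · simp; positivity
  set M : ℤ := ⌊1/δ⌋ + 1 with hM
  have hM1 : (1:ℤ) ≤ M := by
    have : (0:ℤ) ≤ ⌊1/δ⌋ := Int.floor_nonneg.mpr (by positivity)
    omega
  have key : ∀ y ∈ A, |⌊y 0/δ⌋ - ⌊y₀ 0/δ⌋| ≤ M ∧ |⌊y 1/δ⌋ - ⌊y₀ 1/δ⌋| ≤ M := by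
    intro y hy
    obtain ⟨h0, h1⟩ := hbdd y hy y₀ hy₀
    exact ⟨floor_close hδ h0, floor_close hδ h1⟩
  -- the diagonal map is injective on the cells
  obtain ⟨diag, hdiaginj, hdiagbd⟩ :
      ∃ diag : ℤ × ℤ → ℤ, Set.InjOn diag (cell '' A) ∧
        ∀ p ∈ cell '' A, diag p ∈ Set.Icc (diag (cell y₀) - 2*M) (diag (cell y₀) + 2*M) := by
    rcases hanti with hanti | hanti
    · refine ⟨fun cd => cd.1 - cd.2, ?_, ?_⟩
      · rintro p ⟨y, hy, rfl⟩ q ⟨y', hy', rfl⟩ hpq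
        simp only [hcell] at hpq ⊢
        rcases lt_trichotomy (⌊y 0/δ⌋) (⌊y' 0/δ⌋) with hlt | heq | hgt
        · exact absurd ⟨floor_sep hδ hlt, floor_sep hδ (by omega)⟩ (hanti y hy y' hy')
        · simp only [Prod.mk.injEq]; omega
        · exact absurd ⟨floor_sep hδ hgt, floor_sep hδ (by omega)⟩ (hanti y' hy' y hy)
      · rintro p ⟨y, hy, rfl⟩
        obtain ⟨h0, h1⟩ := key y hy
        simp only [hcell, Set.mem_Icc]
        rw [abs_le] at h0 h1; omega
    · refine ⟨fun cd => cd.1 + cd.2, ?_, ?_⟩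
      · rintro p ⟨y, hy, rfl⟩ q ⟨y', hy', rfl⟩ hpq
        simp only [hcell] at hpq ⊢
        rcases lt_trichotomy (⌊y 0/δ⌋) (⌊y' 0/δ⌋) with hlt | heq | hgt
        · exact absurd ⟨floor_sep hδ hlt, floor_sep hδ (by omega)⟩ (hanti y hy y' hy')
        · simp only [Prod.mk.injEq]; omega
        · exact absurd ⟨floor_sep hδ hgt, floor_sep hδ (by omega)⟩ (hanti y' hy' y hy)
      · rintro p ⟨y, hy, rfl⟩
        obtain ⟨h0, h1⟩ := key y hy
        simp only [hcell, Set.mem_Icc]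
        rw [abs_le] at h0 h1; omega
  have hsub : diag '' (cell '' A) ⊆ ↑(Finset.Icc (diag (cell y₀) - 2*M) (diag (cell y₀) + 2*M)) := by
    rintro n ⟨p, hp, rfl⟩
    simpa using hdiagbd p hp
  have himfin : (diag '' (cell '' A)).Finite := (Finset.finite_toSet _).subset hsub
  have hfin : (cell '' A).Finite := Set.Finite.of_finite_image himfin hdiaginj
  refine ⟨hfin, ?_⟩
  have h1 : (cell '' A).ncard = (diag '' (cell '' A)).ncard :=
    (Set.ncard_image_of_injOn hdiaginj).symm
  have h2 : (diag '' (cell '' A)).ncard ≤ (Finset.Icc (diag (cell y₀) - 2*M) (diag (cell y₀) + 2*M)).card := by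
    rw [← Set.ncard_coe_finset]
    exact Set.ncard_le_ncard hsub (Finset.finite_toSet _)
  have h3 : (Finset.Icc (diag (cell y₀) - 2*M) (diag (cell y₀) + 2*M)).card = (4*M+1).toNat := by
    rw [Int.card_Icc]; congr 1; ring
  have h4 : ((4*M+1).toNat : ℝ) = 4*(M:ℝ)+1 := by
    have : ((4*M+1).toNat : ℤ) = 4*M+1 := Int.toNat_of_nonneg (by omega)
    exact_mod_cast congrArg (Int.cast : ℤ → ℝ) this
  have hMr : (M:ℝ) ≤ 1/δ + 1 := by
    have := Int.floor_le (1/δ)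
    rw [hM]; push_cast; linarith
  have h6 : ((cell '' A).ncard : ℝ) ≤ 4*(M:ℝ)+1 := by
    rw [h1, ← h4]
    exact_mod_cast h2.trans_eq h3
  have h7 : 4*(M:ℝ)+1 ≤ 4*(1/δ+1)+1 := by linarith
  have h8 : 4*(1/δ+1)+1 = 4/δ + 5 := by ring
  linarith

private lemma frontier_quadrant {Ω : Set E'} (hC : Convex ℝ Ω) {y : E'}
    (hy : y ∈ frontier Ω) :
    (∀ z ∈ Ω, ¬(y 0 < z 0 ∧ y 1 < z 1)) ∨ (∀ z ∈ Ω, ¬(y 0 < z 0 ∧ z 1 < y 1)) ∨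
    (∀ z ∈ Ω, ¬(z 0 < y 0 ∧ y 1 < z 1)) ∨ (∀ z ∈ Ω, ¬(z 0 < y 0 ∧ z 1 < y 1)) := by
  by_contra h
  push_neg at h
  obtain ⟨⟨z1, h1, a1, b1⟩, ⟨z2, h2, a2, b2⟩, ⟨z3, h3, a3, b3⟩, ⟨z4, h4, a4, b4⟩⟩ := h
  exact hy.2 (surrounded_mem_interior hC y z1 z2 z3 z4 h1 h2 h3 h4 a1 b1 a2 b2 a3 b3 a4 b4)

/-- The inner `ε`-collar of a compact convex planar set of diameter `1` meets at most
`C/ε` of the grid squares of side length `ε/4`, for a universal constant `C > 0`. -/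
theorem collar_box_count :
    ∃ C : ℝ, 0 < C ∧
      ∀ (Ω : Set (EuclideanSpace ℝ (Fin 2))), IsCompact Ω → Convex ℝ Ω →
        Metric.diam Ω = 1 →
        ∀ (ε : ℝ), 0 < ε → ε < 1 / 1000 →
          let Ωε : Set (EuclideanSpace ℝ (Fin 2)) :=
            {x ∈ Ω | Metric.infDist x (frontier Ω) ≤ ε}
          let Q : ℤ × ℤ → Set (EuclideanSpace ℝ (Fin 2)) := fun ab =>
            {x | x 0 ∈ Set.Icc ((ab.1 : ℝ) * (ε / 4)) (((ab.1 : ℝ) + 1) * (ε / 4)) ∧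
                 x 1 ∈ Set.Icc ((ab.2 : ℝ) * (ε / 4)) (((ab.2 : ℝ) + 1) * (ε / 4))}
          {ab : ℤ × ℤ | (Q ab ∩ Ωε).Nonempty}.Finite ∧
            ({ab : ℤ × ℤ | (Q ab ∩ Ωε).Nonempty}.ncard : ℝ) ≤ C / ε := by
  refine ⟨20000, by norm_num, ?_⟩
  intro Ω hcomp hconv hdiam ε hε hε' Ωε Q
  have hδ : (0:ℝ) < ε/4 := by positivity
  have hΩcl : IsClosed Ω := hcomp.isClosed
  have hFsub : frontier Ω ⊆ Ω := hΩcl.frontier_subset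
  have hFcomp : IsCompact (frontier Ω) := hcomp.of_isClosed_subset isClosed_frontier hFsub
  have hΩne : Ω.Nonempty := by
    by_contra h
    rw [not_nonempty_iff_eq_empty] at h
    rw [h, Metric.diam_empty] at hdiam
    norm_num at hdiam
  have hΩnu : Ω ≠ univ := by
    intro h
    rw [h] at hcomp
    exact noncompact_univ (EuclideanSpace ℝ (Fin 2)) hcomp
  have hFne : (frontier Ω).Nonempty := by
    rw [nonempty_iff_ne_empty]
    intro h
    rcases frontier_eq_empty_iff.mp h with h' | h'
    · exact hΩne.ne_empty h'
    · exact hΩnu h'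
  have hFbdd : ∀ y ∈ frontier Ω, ∀ y' ∈ frontier Ω,
      |y 0 - y' 0| ≤ 1 ∧ |y 1 - y' 1| ≤ 1 := by
    intro y hy y' hy'
    have hd : dist y y' ≤ 1 :=
      hdiam ▸ Metric.dist_le_diam_of_mem hcomp.isBounded (hFsub hy) (hFsub hy')
    exact ⟨(coord_abs_le_dist y y' 0).trans hd, (coord_abs_le_dist y y' 1).trans hd⟩
  -- four staircase pieces of the frontier
  set A1 := {y ∈ frontier Ω | ∀ z ∈ Ω, ¬(y 0 < z 0 ∧ y 1 < z 1)} with hA1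
  set A2 := {y ∈ frontier Ω | ∀ z ∈ Ω, ¬(y 0 < z 0 ∧ z 1 < y 1)} with hA2
  set A3 := {y ∈ frontier Ω | ∀ z ∈ Ω, ¬(z 0 < y 0 ∧ y 1 < z 1)} with hA3
  set A4 := {y ∈ frontier Ω | ∀ z ∈ Ω, ¬(z 0 < y 0 ∧ z 1 < y 1)} with hA4
  have hcover : frontier Ω ⊆ A1 ∪ A2 ∪ A3 ∪ A4 := by
    intro y hy
    simp only [Set.mem_union, hA1, hA2, hA3, hA4, Set.mem_setOf_eq]
    rcases frontier_quadrant hconv hy with h | h | h | h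
    · exact Or.inl (Or.inl (Or.inl ⟨hy, h⟩))
    · exact Or.inl (Or.inl (Or.inr ⟨hy, h⟩))
    · exact Or.inl (Or.inr ⟨hy, h⟩)
    · exact Or.inr ⟨hy, h⟩
  set cell : E' → ℤ × ℤ := fun y => (⌊y 0/(ε/4)⌋, ⌊y 1/(ε/4)⌋) with hcell
  have bdd : ∀ B : Set E', B ⊆ frontier Ω →
      ∀ y ∈ B, ∀ y' ∈ B, |y 0 - y' 0| ≤ 1 ∧ |y 1 - y' 1| ≤ 1 :=
    fun B hB y hy y' hy' => hFbdd y (hB hy) y' (hB hy')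
  have c1 := cell_staircase hδ A1 (bdd A1 (fun y hy => hy.1))
    (Or.inl (fun y hy y' hy' => hy.2 y' (hFsub hy'.1)))
  have c2 := cell_staircase hδ A2 (bdd A2 (fun y hy => hy.1))
    (Or.inr (fun y hy y' hy' => hy.2 y' (hFsub hy'.1)))
  have c3 := cell_staircase hδ A3 (bdd A3 (fun y hy => hy.1))
    (Or.inr (fun y hy y' hy' h => hy'.2 y (hFsub hy.1) ⟨h.1, h.2⟩))
  have c4 := cell_staircase hδ A4 (bdd A4 (fun y hy => hy.1))
    (Or.inl (fun y hy y' hy' h => hy'.2 y (hFsub hy.1) ⟨h.1, h.2⟩))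
  rw [← hcell] at c1 c2 c3 c4
  set T := cell '' (frontier Ω) with hT
  have hTsub : T ⊆ cell '' A1 ∪ cell '' A2 ∪ cell '' A3 ∪ cell '' A4 := by
    rw [hT, ← Set.image_union, ← Set.image_union, ← Set.image_union]
    exact Set.image_mono hcover
  have hTfin : T.Finite :=
    (((c1.1.union c2.1).union c3.1).union c4.1).subset hTsub
  have hTcard : (T.ncard : ℝ) ≤ 16/(ε/4) + 20 := by
    have h1 : T.ncard ≤ (cell '' A1 ∪ cell '' A2 ∪ cell '' A3 ∪ cell '' A4).ncard :=
      Set.ncard_le_ncard hTsub (((c1.1.union c2.1).union c3.1).union c4.1)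
    have h2 := Set.ncard_union_le (cell '' A1 ∪ cell '' A2 ∪ cell '' A3) (cell '' A4)
    have h3 := Set.ncard_union_le (cell '' A1 ∪ cell '' A2) (cell '' A3)
    have h4 := Set.ncard_union_le (cell '' A1) (cell '' A2)
    have cast1 : (T.ncard : ℝ) ≤ ((cell '' A1).ncard : ℝ) + ((cell '' A2).ncard : ℝ)
        + ((cell '' A3).ncard : ℝ) + ((cell '' A4).ncard : ℝ) := by
      push_cast
      have : T.ncard ≤ (cell '' A1).ncard + (cell '' A2).ncard
          + (cell '' A3).ncard + (cell '' A4).ncard := by omega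
      exact_mod_cast this
    linarith [c1.2, c2.2, c3.2, c4.2, show (16:ℝ)/(ε/4) = 4*(4/(ε/4)) from by ring]
  -- covering the squares that hit the collar
  set O := (Finset.Icc (-5 : ℤ) 5) ×ˢ (Finset.Icc (-5 : ℤ) 5) with hO
  have hScov : {ab : ℤ × ℤ | (Q ab ∩ Ωε).Nonempty} ⊆
      (fun p : (ℤ×ℤ)×(ℤ×ℤ) => (p.1.1+p.2.1, p.1.2+p.2.2)) '' (T ×ˢ (↑O : Set (ℤ×ℤ))) := by
    rintro ⟨a, b⟩ ⟨x, hxQ, hxC⟩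
    have hxΩ : x ∈ Ω := hxC.1
    have hxd : Metric.infDist x (frontier Ω) ≤ ε := hxC.2
    obtain ⟨y, hyF, hxy⟩ := hFcomp.exists_infDist_eq_dist hFne x
    rw [hxy] at hxd
    have h0 : |x 0 - y 0| ≤ ε := (coord_abs_le_dist x y 0).trans hxd
    have h1 : |x 1 - y 1| ≤ ε := (coord_abs_le_dist x y 1).trans hxd
    rw [abs_le] at h0 h1
    obtain ⟨⟨ha1, ha2⟩, ⟨hb1, hb2⟩⟩ := hxQ
    set c : ℤ := ⌊y 0/(ε/4)⌋ with hc
    set d : ℤ := ⌊y 1/(ε/4)⌋ with hd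
    have hc1 : (c:ℝ) ≤ y 0/(ε/4) := Int.floor_le _
    have hc2 : y 0/(ε/4) < (c:ℝ) + 1 := Int.lt_floor_add_one _
    have hd1 : (d:ℝ) ≤ y 1/(ε/4) := Int.floor_le _
    have hd2 : y 1/(ε/4) < (d:ℝ) + 1 := Int.lt_floor_add_one _
    have hxa1 : (a:ℝ) ≤ x 0/(ε/4) := (le_div_iff₀ hδ).mpr ha1
    have hxa2 : x 0/(ε/4) ≤ (a:ℝ) + 1 := by
      rw [div_le_iff₀ hδ]; linarith
    have hxb1 : (b:ℝ) ≤ x 1/(ε/4) := (le_div_iff₀ hδ).mpr hb1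
    have hxb2 : x 1/(ε/4) ≤ (b:ℝ) + 1 := by
      rw [div_le_iff₀ hδ]; linarith
    have hgap0 : -4 ≤ x 0/(ε/4) - y 0/(ε/4) ∧ x 0/(ε/4) - y 0/(ε/4) ≤ 4 := by
      rw [div_sub_div_same]
      constructor
      · rw [neg_le, ← neg_div, div_le_iff₀ hδ]; linarith
      · rw [div_le_iff₀ hδ]; linarith
    have hgap1 : -4 ≤ x 1/(ε/4) - y 1/(ε/4) ∧ x 1/(ε/4) - y 1/(ε/4) ≤ 4 := by
      rw [div_sub_div_same]
      constructor
      · rw [neg_le, ← neg_div, div_le_iff₀ hδ]; linarith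
      · rw [div_le_iff₀ hδ]; linarith
    have haci : a - c ∈ Finset.Icc (-5:ℤ) 5 := by
      rw [Finset.mem_Icc]
      have hu : (a:ℝ) < (c:ℝ) + 5 := by linarith [hgap0.2]
      have hl : (c:ℝ) - 5 ≤ (a:ℝ) := by linarith [hgap0.1]
      have hu' : a < c + 5 := by exact_mod_cast hu
      have hl' : c - 5 ≤ a := by exact_mod_cast hl
      omega
    have hbdi : b - d ∈ Finset.Icc (-5:ℤ) 5 := by
      rw [Finset.mem_Icc]
      have hu : (b:ℝ) < (d:ℝ) + 5 := by linarith [hgap1.2]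
      have hl : (d:ℝ) - 5 ≤ (b:ℝ) := by linarith [hgap1.1]
      have hu' : b < d + 5 := by exact_mod_cast hu
      have hl' : d - 5 ≤ b := by exact_mod_cast hl
      omega
    refine ⟨((c,d),(a-c,b-d)), ⟨⟨y, hyF, rfl⟩, ?_⟩, ?_⟩
    · rw [hO]
      simp only [Finset.coe_product, Set.mem_prod, Finset.mem_coe]
      exact ⟨haci, hbdi⟩
    · simp only [Prod.mk.injEq]
      omega
  have hSfin : {ab : ℤ × ℤ | (Q ab ∩ Ωε).Nonempty}.Finite :=
    ((hTfin.prod O.finite_toSet).image _).subset hScov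
  refine ⟨hSfin, ?_⟩
  have hprodfin : (T ×ˢ (↑O : Set (ℤ×ℤ))).Finite := hTfin.prod O.finite_toSet
  have hcard1 : {ab : ℤ × ℤ | (Q ab ∩ Ωε).Nonempty}.ncard ≤ (T ×ˢ (↑O : Set (ℤ×ℤ))).ncard := by
    calc {ab : ℤ × ℤ | (Q ab ∩ Ωε).Nonempty}.ncard
        ≤ ((fun p : (ℤ×ℤ)×(ℤ×ℤ) => (p.1.1+p.2.1, p.1.2+p.2.2)) '' (T ×ˢ (↑O : Set (ℤ×ℤ)))).ncard :=
          Set.ncard_le_ncard hScov (hprodfin.image _)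
      _ ≤ (T ×ˢ (↑O : Set (ℤ×ℤ))).ncard := Set.ncard_image_le hprodfin
  have hcard2 : (T ×ˢ (↑O : Set (ℤ×ℤ))).ncard = T.ncard * 121 := by
    have e1 : T ×ˢ (↑O : Set (ℤ×ℤ)) = ↑(hTfin.toFinset ×ˢ O) := by
      rw [Finset.coe_product hTfin.toFinset O, hTfin.coe_toFinset]
    have hc : hTfin.toFinset.card = T.ncard := by
      rw [← Set.ncard_coe_finset, hTfin.coe_toFinset]
    have hOc : O.card = 121 := by
      rw [hO, Finset.card_product, Int.card_Icc]
      rfl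
    rw [e1, Set.ncard_coe_finset, Finset.card_product, hc, hOc]
  have hfinal : ({ab : ℤ × ℤ | (Q ab ∩ Ωε).Nonempty}.ncard : ℝ) ≤ (T.ncard : ℝ) * 121 := by
    have := hcard1.trans_eq hcard2
    exact_mod_cast this
  have h64 : 16/(ε/4) = 64/ε := by
    field_simp
    norm_num
  have h2420 : (2420:ℝ) ≤ 12256/ε := by
    rw [le_div_iff₀ hε]
    nlinarith
  have hring : ((16:ℝ)/(ε/4) + 20) * 121 = 64/ε * 121 + 2420 := by
    rw [h64]; ring
  have : ({ab : ℤ × ℤ | (Q ab ∩ Ωε).Nonempty}.ncard : ℝ) ≤ 64/ε * 121 + 2420 := by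
    calc ({ab : ℤ × ℤ | (Q ab ∩ Ωε).Nonempty}.ncard : ℝ) ≤ (T.ncard : ℝ) * 121 := hfinal
      _ ≤ (16/(ε/4) + 20) * 121 := by nlinarith [hTcard]
      _ = 64/ε * 121 + 2420 := hring
  have hsplit : (20000:ℝ)/ε = 64/ε * 121 + 12256/ε := by ring
  linarith
end

section
/- For every c > 0 there exists a constant C > 0 (depending only on c) with the following property. Let G = (V, E) be a simple graph on k ≥ 2 vertices. Suppose that for each vertex v ∈ V there exists a set of vertices N_v ⊆ V with |N_v| ≤ c·√k such that for every integer s with 1 ≤ s ≤ k, the number of vertices w ∈ V \ N_v whose common neighborhood with v satisfies |N(v) ∩ N(w)| ≥ s is at most c·k/s. Then the number of edges of G satisfies |E| ≤ C · √(log k) · k^{3/2}. -/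
/-!
Counting paths of length two, `∑ v, ∑ w, |N(v) ∩ N(w)| = ∑ u, deg(u)²`. For fixed `v`, the
vertices `w ∈ N_v` contribute at most `|N_v| · deg v`, and by the layer-cake formula the
others contribute at most `∑_{s ≤ k} c k / s ≤ c k (1 + log k)`. Summing over `v` and using
Cauchy–Schwarz, `(2|E|)² ≤ k ∑ deg² ≤ 2 c k^{3/2} |E| + c k³ (1 + log k)`, a quadratic
inequality in `|E|` giving `|E|² = O(k³ log k)`.
-/

open Finset

namespace Finset

variable {ι : Type*}

theorem sum_eq_sum_range_card_filter_lt (A : Finset ι) (f : ι → ℕ) {M : ℕ}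
    (hf : ∀ i ∈ A, f i ≤ M) :
    ∑ i ∈ A, f i = ∑ s ∈ range M, #{i ∈ A | s < f i} := by
  have hrange : ∀ i ∈ A, {s ∈ range M | s < f i} = range (f i) := fun i hi => by
    ext s
    simp only [mem_filter, mem_range]
    exact ⟨And.right, fun h => ⟨h.trans_le (hf i hi), h⟩⟩
  calc ∑ i ∈ A, f i = ∑ i ∈ A, #{s ∈ range M | s < f i} :=
        sum_congr rfl fun i hi => by rw [hrange i hi, card_range]
    _ = _ := by simp only [card_filter]; exact sum_comm

theorem sum_le_mul_harmonic_of_card_filter_le (A : Finset ι) (f : ι → ℕ) (M : ℕ) (K : ℝ)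
    (hf : ∀ i ∈ A, f i ≤ M)
    (htail : ∀ s : ℕ, 1 ≤ s → s ≤ M → (#{i ∈ A | s ≤ f i} : ℝ) ≤ K / s) :
    (∑ i ∈ A, f i : ℝ) ≤ K * harmonic M := by
  rw_mod_cast [sum_eq_sum_range_card_filter_lt A f hf]
  push_cast
  calc (∑ s ∈ range M, #{i ∈ A | s < f i} : ℝ)
      ≤ ∑ s ∈ range M, K / (s + 1 : ℕ) :=
        sum_le_sum fun s hs => htail (s + 1) s.succ_pos (mem_range.1 hs)
    _ = K * harmonic M := by
        simp [harmonic, mul_sum, div_eq_mul_inv]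

end Finset

namespace SimpleGraph

variable {V : Type*} [Fintype V] (G : SimpleGraph V) [DecidableRel G.Adj]

theorem sq_two_mul_card_edgeFinset_le :
    (2 * #G.edgeFinset : ℝ) ^ 2 ≤ Fintype.card V * ∑ u, (G.degree u : ℝ) ^ 2 := by
  have := sq_sum_le_card_mul_sum_sq (s := univ) (f := fun u => (G.degree u : ℝ))
  rw_mod_cast [sum_degrees_eq_twice_card_edges] at this
  simpa using this

variable [DecidableEq V]

theorem ncard_neighborSet_inter_neighborSet (v w : V) :
    (G.neighborSet v ∩ G.neighborSet w).ncard = #(G.neighborFinset v ∩ G.neighborFinset w) := by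
  rw [← Set.ncard_coe_finset, coe_inter, coe_neighborFinset, coe_neighborFinset]

theorem sum_card_neighborFinset_inter_neighborFinset (v : V) :
    ∑ w, #(G.neighborFinset v ∩ G.neighborFinset w) = ∑ u ∈ G.neighborFinset v, G.degree u := by
  convert sum_card_bipartiteAbove_eq_sum_card_bipartiteBelow (s := univ)
    (t := G.neighborFinset v) (fun w u => G.Adj w u) using 2 with w _ u
  · congr 1; ext u; simp [bipartiteAbove]
  · rw [← card_neighborFinset_eq_degree]; congr 1; ext w; simp [bipartiteBelow, adj_comm]

theorem sum_sum_card_neighborFinset_inter_neighborFinset :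
    ∑ v, ∑ w, #(G.neighborFinset v ∩ G.neighborFinset w) = ∑ u, G.degree u ^ 2 := by
  simp_rw [sum_card_neighborFinset_inter_neighborFinset, neighborFinset_eq_filter, sum_filter]
  rw [sum_comm]
  simp [← sum_filter, sq, ← neighborFinset_eq_filter, adj_comm]

theorem three_mul_sq_card_edgeFinset_le (a b : ℝ)
    (h : ∀ v, (∑ w, #(G.neighborFinset v ∩ G.neighborFinset w) : ℝ) ≤ a * G.degree v + b) :
    3 * (#G.edgeFinset : ℝ) ^ 2 ≤ Fintype.card V ^ 2 * (a ^ 2 + b) := by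
  set n : ℝ := (Fintype.card V : ℝ)
  set E : ℝ := (#G.edgeFinset : ℝ)
  have hdeg_sq : ∑ u, (G.degree u : ℝ) ^ 2 ≤ a * (2 * E) + n * b := by
    calc ∑ u, (G.degree u : ℝ) ^ 2
        = ∑ v, ∑ w, (#(G.neighborFinset v ∩ G.neighborFinset w) : ℝ) := by
          exact_mod_cast G.sum_sum_card_neighborFinset_inter_neighborFinset.symm
      _ ≤ ∑ v, (a * G.degree v + b) := sum_le_sum fun v _ => h v
      _ = a * (2 * E) + n * b := by
          rw [sum_add_distrib, ← mul_sum]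
          simp [n, E, ← Nat.cast_sum, sum_degrees_eq_twice_card_edges]
  have hn : 0 ≤ n := by positivity
  nlinarith [G.sq_two_mul_card_edgeFinset_le, sq_nonneg (E - n * a),
    mul_le_mul_of_nonneg_left hdeg_sq hn]

theorem sum_card_neighborFinset_inter_neighborFinset_le (v : V) (Nv : Set V) (K : ℝ)
    (htail : ∀ s : ℕ, 1 ≤ s → s ≤ Fintype.card V →
      ({w | w ∉ Nv ∧ s ≤ (G.neighborSet v ∩ G.neighborSet w).ncard}.ncard : ℝ) ≤ K / s) :
    (∑ w, #(G.neighborFinset v ∩ G.neighborFinset w) : ℝ) ≤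
      Nv.ncard * G.degree v + K * harmonic (Fintype.card V) := by
  classical
  rw [← sum_filter_add_sum_filter_not univ (· ∈ Nv)]
  gcongr
  · calc (∑ w ∈ univ with w ∈ Nv, #(G.neighborFinset v ∩ G.neighborFinset w) : ℝ)
        ≤ ∑ w ∈ univ with w ∈ Nv, (G.degree v : ℝ) := by
          gcongr with w
          rw [← card_neighborFinset_eq_degree]
          exact card_le_card inter_subset_left
      _ = Nv.ncard * G.degree v := by
          rw [sum_const, nsmul_eq_mul, Set.filter_mem_univ_eq_toFinset,
            Set.ncard_eq_toFinset_card']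
  · refine sum_le_mul_harmonic_of_card_filter_le _ _ _ K (fun w _ => ?_) fun s hs hsn => ?_
    · exact (card_le_card inter_subset_left).trans (card_le_univ _)
    · convert htail s hs hsn using 2
      rw [Set.ncard_eq_toFinset_card']
      congr 1
      ext w
      simp [ncard_neighborSet_inter_neighborSet]

end SimpleGraph

/-- Graph-theoretic lemma: if in a simple graph on `k ≥ 2` vertices every vertex `v` has
an exceptional set `N_v` of at most `c√k` vertices such that for every `1 ≤ s ≤ k` at
most `c·k/s` non-exceptional vertices share at least `s` common neighbors with `v`, then
the graph has at most `C · √(log k) · k^{3/2}` edges. -/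
theorem few_edges_of_few_common_neighbors :
    ∀ c : ℝ, 0 < c → ∃ C : ℝ, 0 < C ∧
      ∀ (k : ℕ), 2 ≤ k → ∀ (G : SimpleGraph (Fin k)),
        (∀ v : Fin k, ∃ Nv : Set (Fin k),
          (Nv.ncard : ℝ) ≤ c * Real.sqrt k ∧
          ∀ s : ℕ, 1 ≤ s → s ≤ k →
            ({w : Fin k | w ∉ Nv ∧
                s ≤ (G.neighborSet v ∩ G.neighborSet w).ncard}.ncard : ℝ) ≤
              c * k / s) →
        (G.edgeSet.ncard : ℝ) ≤ C * Real.sqrt (Real.log k) * (k : ℝ) ^ (3 / 2 : ℝ) := by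
  intro c hc
  refine ⟨c + 1, by positivity, fun k hk G hG => ?_⟩
  classical
  have hk0 : (0 : ℝ) ≤ k := k.cast_nonneg
  have hL : 1 ≤ 2 * Real.log k := by
    have := Real.log_le_log two_pos (by exact_mod_cast hk : (2 : ℝ) ≤ k)
    linarith [Real.log_two_gt_d9]
  have hcodeg : ∀ v, (∑ w, #(G.neighborFinset v ∩ G.neighborFinset w) : ℝ) ≤
      c * √k * G.degree v + c * k * (1 + Real.log k) := by
    intro v
    obtain ⟨Nv, hNv, htail⟩ := hG v
    calc _ ≤ Nv.ncard * G.degree v + c * k * harmonic (Fintype.card (Fin k)) :=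
          G.sum_card_neighborFinset_inter_neighborFinset_le v Nv _
            fun s hs hsk => htail s hs (by simpa using hsk)
      _ ≤ _ := by
          rw [Fintype.card_fin]
          gcongr
          exact harmonic_le_one_add_log k
  have hE := G.three_mul_sq_card_edgeFinset_le _ _ hcodeg
  rw [Fintype.card_fin, mul_pow, Real.sq_sqrt hk0] at hE
  have hk32 : ((k : ℝ) ^ (3 / 2 : ℝ)) ^ 2 = k ^ 3 := by
    rw [← Real.rpow_natCast, ← Real.rpow_mul hk0]; norm_num
  rw [← SimpleGraph.coe_edgeFinset, Set.ncard_coe_finset,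
    ← pow_le_pow_iff_left₀ (by positivity) (by positivity) two_ne_zero,
    mul_pow, mul_pow, hk32, Real.sq_sqrt (by linarith)]
  have hck : 0 ≤ c * k := by positivity
  have hbracket : c ^ 2 * k + c * k * (1 + Real.log k) ≤ 3 * (c + 1) ^ 2 * Real.log k * k := by
    nlinarith [mul_le_mul_of_nonneg_left hL (mul_nonneg hc.le hck),
      mul_le_mul_of_nonneg_left hL hck, mul_le_mul_of_nonneg_left hL hk0]
  nlinarith [mul_le_mul_of_nonneg_left hbracket (sq_nonneg (k : ℝ))]
end

section
/- Let 0 < ε < 1/1000 and 10·√ε ≤ d ≤ 1, and set a = (−d/2, 0) and b = (d/2, 0) in ℝ². Then every point x = (x₁, x₂) ∈ ℝ² satisfying 1 − ε ≤ ‖x − a‖ ≤ 1 and 1 − ε ≤ ‖x − b‖ ≤ 1 satisfies |x₂| ≥ 1/2. In particular, any two points of this annuli intersection lying on opposite sides of the x-axis are at distance ≥ 1 from each other, so a set of diameter ≤ 1 cannot meet both connected components. -/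
set_option maxHeartbeats 1000000

theorem annuli_arith_aux (d ε u v : ℝ) (hε0 : 0 < ε) (hε1 : ε < 1 / 1000)
    (hd1 : 10 * Real.sqrt ε ≤ d) (hd2 : d ≤ 1)
    (hA1 : (1 - ε)^2 ≤ (u + d/2)^2 + v^2) (hA2 : (u + d/2)^2 + v^2 ≤ 1)
    (hB1 : (1 - ε)^2 ≤ (u - d/2)^2 + v^2) (hB2 : (u - d/2)^2 + v^2 ≤ 1) :
    (1:ℝ)/4 ≤ v^2 := by
  have hs0 : (0:ℝ) ≤ Real.sqrt ε := Real.sqrt_nonneg ε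
  have hs2 : Real.sqrt ε ^ 2 = ε := Real.sq_sqrt hε0.le
  have hd0 : 0 < d := lt_of_lt_of_le (by positivity) hd1
  have hsε : Real.sqrt ε < 1/10 := by
    rw [show (1:ℝ)/10 = Real.sqrt (1/100) by
      rw [show (1:ℝ)/100 = (1/10)^2 by norm_num, Real.sqrt_sq (by norm_num)]]
    exact Real.sqrt_lt_sqrt hε0.le (by linarith)
  have hid : (u + d/2)^2 - (u - d/2)^2 = 2*d*u := by ring
  have hsq : (1-ε)^2 = 1 - 2*ε + ε^2 := by ring
  have hε2 : (0:ℝ) ≤ ε^2 := sq_nonneg ε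
  have hu1 : 2 * d * u ≤ 2*ε - ε^2 := by linarith
  have hu2 : -(2*ε - ε^2) ≤ 2 * d * u := by linarith
  have h10 : 10 * ε ≤ d * Real.sqrt ε := by nlinarith [mul_le_mul_of_nonneg_right hd1 hs0]
  have hxu : u ≤ Real.sqrt ε / 10 := by
    have h' : d * (10 * u) ≤ d * Real.sqrt ε := by linarith
    have := (mul_le_mul_iff_right₀ hd0).mp h'
    linarith
  have hxl : -(Real.sqrt ε / 10) ≤ u := by
    have h' : d * (-Real.sqrt ε) ≤ d * (10 * u) := by linarith
    have := (mul_le_mul_iff_right₀ hd0).mp h'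
    linarith
  have hc1 : u + d/2 ≤ 51/100 := by linarith
  have hc0 : 0 ≤ u + d/2 := by linarith
  have hc2 : (u + d/2)^2 ≤ (51/100)^2 := pow_le_pow_left₀ hc0 hc1 2
  nlinarith

/-- For `0 < ε < 1/1000` and `10√ε ≤ d ≤ 1`, every point in the intersection of the two
annuli `{1-ε ≤ ‖x-a‖ ≤ 1}` and `{1-ε ≤ ‖x-b‖ ≤ 1}`, with `a = (-d/2, 0)` and
`b = (d/2, 0)`, has `|x₂| ≥ 1/2`; in particular any two points of this intersection
lying on opposite sides of the x-axis are at distance `≥ 1` from each other. -/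
theorem annuli_intersection_second_coordinate (d ε : ℝ)
    (hε0 : 0 < ε) (hε1 : ε < 1 / 1000)
    (hd1 : 10 * Real.sqrt ε ≤ d) (hd2 : d ≤ 1)
    (a b : EuclideanSpace ℝ (Fin 2)) (ha : a = ![-d / 2, 0]) (hb : b = ![d / 2, 0]) :
    (∀ x : EuclideanSpace ℝ (Fin 2),
      1 - ε ≤ ‖x - a‖ → ‖x - a‖ ≤ 1 → 1 - ε ≤ ‖x - b‖ → ‖x - b‖ ≤ 1 →
      1 / 2 ≤ |x 1|) ∧
    (∀ x y : EuclideanSpace ℝ (Fin 2),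
      1 - ε ≤ ‖x - a‖ → ‖x - a‖ ≤ 1 → 1 - ε ≤ ‖x - b‖ → ‖x - b‖ ≤ 1 →
      1 - ε ≤ ‖y - a‖ → ‖y - a‖ ≤ 1 → 1 - ε ≤ ‖y - b‖ → ‖y - b‖ ≤ 1 →
      x 1 ≤ 0 → 0 ≤ y 1 → 1 ≤ ‖x - y‖) := by
  have key : ∀ x : EuclideanSpace ℝ (Fin 2),
      1 - ε ≤ ‖x - a‖ → ‖x - a‖ ≤ 1 → 1 - ε ≤ ‖x - b‖ → ‖x - b‖ ≤ 1 →
      1 / 2 ≤ |x 1| := by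
    intro x h1 h2 h3 h4
    have hA : ‖x - a‖ ^ 2 = (x 0 + d/2)^2 + (x 1)^2 := by
      rw [EuclideanSpace.norm_eq, WithLp.ofLp_sub, ha, Real.sq_sqrt (by positivity)]
      simp [Fin.sum_univ_two, sq_abs]
      ring
    have hB : ‖x - b‖ ^ 2 = (x 0 - d/2)^2 + (x 1)^2 := by
      rw [EuclideanSpace.norm_eq, WithLp.ofLp_sub, hb, Real.sq_sqrt (by positivity)]
      simp [Fin.sum_univ_two, sq_abs]
    obtain ⟨u, hu⟩ : ∃ u:ℝ, u = x 0 := ⟨_, rfl⟩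
    obtain ⟨v, hv0⟩ : ∃ v:ℝ, v = x 1 := ⟨_, rfl⟩
    rw [← hu, ← hv0] at hA hB
    rw [← hv0]
    have hε1' : (1:ℝ) - ε ≥ 0 := by linarith
    have hA1 : (1 - ε)^2 ≤ (u + d/2)^2 + v^2 := by
      rw [← hA]; exact pow_le_pow_left₀ hε1' h1 2
    have hA2 : (u + d/2)^2 + v^2 ≤ 1 := by
      rw [← hA]; nlinarith [norm_nonneg (x - a)]
    have hB1 : (1 - ε)^2 ≤ (u - d/2)^2 + v^2 := by
      rw [← hB]; exact pow_le_pow_left₀ hε1' h3 2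
    have hB2 : (u - d/2)^2 + v^2 ≤ 1 := by
      rw [← hB]; nlinarith [norm_nonneg (x - b)]
    have hv : (1:ℝ)/4 ≤ v^2 :=
      annuli_arith_aux d ε u v hε0 hε1 hd1 hd2 hA1 hA2 hB1 hB2
    nlinarith [sq_abs v, abs_nonneg v]
  refine ⟨key, ?_⟩
  intro x y h1 h2 h3 h4 h5 h6 h7 h8 hx hy
  have hx1 : 1/2 ≤ |x 1| := key x h1 h2 h3 h4
  have hy1 : 1/2 ≤ |y 1| := key y h5 h6 h7 h8
  have hx1' : x 1 ≤ -(1/2) := by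
    rcases abs_cases (x 1) with h | h
    · linarith [h.1]
    · linarith [h.1]
  have hy1' : 1/2 ≤ y 1 := by
    rcases abs_cases (y 1) with h | h
    · linarith [h.1]
    · linarith [h.1]
  have hn : ‖x - y‖ ^ 2 = (x 0 - y 0)^2 + (x 1 - y 1)^2 := by
    rw [EuclideanSpace.norm_eq, Real.sq_sqrt (by positivity)]
    simp [Fin.sum_univ_two, sq_abs]
  obtain ⟨t, ht⟩ : ∃ t:ℝ, t = x 0 - y 0 := ⟨_, rfl⟩
  obtain ⟨w, hw⟩ : ∃ w:ℝ, w = x 1 - y 1 := ⟨_, rfl⟩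
  obtain ⟨n, hn0⟩ : ∃ n:ℝ, n = ‖x - y‖ := ⟨_, rfl⟩
  rw [← ht, ← hw, ← hn0] at hn
  rw [← hn0]
  have hwn : w ≤ -1 := by rw [hw]; linarith
  have hn1 : 1 ≤ n^2 := by nlinarith [sq_nonneg t]
  have hnn : 0 ≤ n := by rw [hn0]; exact norm_nonneg _
  nlinarith
end

section
/- There exists a universal constant C > 0 with the following property. Let 0 < ε < 1/1000 and 10·√ε ≤ d ≤ 1, and set a = (−d/2, 0) and b = (d/2, 0) in ℝ². Then for any two points x = (x₁, x₂) and y = (y₁, y₂) with x₂ ≥ 0, y₂ ≥ 0 and 1 − ε ≤ ‖x − a‖ ≤ 1, 1 − ε ≤ ‖x − b‖ ≤ 1, 1 − ε ≤ ‖y − a‖ ≤ 1, 1 − ε ≤ ‖y − b‖ ≤ 1, one has ‖x − y‖ ≤ C · ε/d. -/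
lemma half_le_aux (ε v s : ℝ) (hε : 0 < ε) (hε1 : ε < 1/1000) (hv : 0 ≤ v)
    (hs : s ≤ (1/2 + 1/310)^2) (h : (1-ε)^2 ≤ s + v^2) : 1/2 ≤ v := by nlinarith

lemma small_aux (e : ℝ) (h0 : 0 < e) (h : e ≤ 1/310) : 2*e*(2*e+1) ≤ 3*e := by nlinarith

lemma diff_le_aux (v v' e : ℝ) (he : 0 ≤ e) (hvl : 1/2 ≤ v) (hvl' : 1/2 ≤ v')
    (h : v^2 - v'^2 ≤ 5*e) : v - v' ≤ 5*e := by nlinarith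

lemma ud_le_aux (u v d ε : ℝ) (h1 : (u + d/2)^2 + v^2 ≤ 1)
    (h2 : (1-ε)^2 ≤ (u - d/2)^2 + v^2) : u * d ≤ ε := by nlinarith [sq_nonneg ε]

lemma ud_le_aux' (u v d ε : ℝ) (h1 : (u - d/2)^2 + v^2 ≤ 1)
    (h2 : (1-ε)^2 ≤ (u + d/2)^2 + v^2) : -u * d ≤ ε := by nlinarith [sq_nonneg ε]

set_option maxHeartbeats 1600000 in
lemma annuli_key (d ε u v u' v' : ℝ) (hε : 0 < ε) (hε1 : ε < 1/1000)
    (hd1 : 10 * Real.sqrt ε ≤ d) (hd2 : d ≤ 1)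
    (hv : 0 ≤ v) (hv' : 0 ≤ v')
    (hxa1 : (1-ε)^2 ≤ (u + d/2)^2 + v^2) (hxa2 : (u + d/2)^2 + v^2 ≤ 1)
    (hxb1 : (1-ε)^2 ≤ (u - d/2)^2 + v^2) (hxb2 : (u - d/2)^2 + v^2 ≤ 1)
    (hya1 : (1-ε)^2 ≤ (u' + d/2)^2 + v'^2) (hya2 : (u' + d/2)^2 + v'^2 ≤ 1)
    (hyb1 : (1-ε)^2 ≤ (u' - d/2)^2 + v'^2) (hyb2 : (u' - d/2)^2 + v'^2 ≤ 1) :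
    (u - u')^2 + (v - v')^2 ≤ (10 * ε / d)^2 := by
  have hs : 0 < Real.sqrt ε := Real.sqrt_pos.mpr hε
  have hd0 : 0 < d := lt_of_lt_of_le (by linarith) hd1
  have hss : Real.sqrt ε * Real.sqrt ε = ε := Real.mul_self_sqrt hε.le
  have hs31 : Real.sqrt ε < 1/31 := by
    rw [show (1:ℝ)/31 = Real.sqrt ((1/31)^2) by rw [Real.sqrt_sq]; norm_num]
    exact Real.sqrt_lt_sqrt hε.le (by nlinarith)
  have hed : ε / d ≤ Real.sqrt ε / 10 := by
    rw [div_le_div_iff₀ hd0 (by norm_num)]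
    have := mul_le_mul_of_nonneg_left hd1 hs.le
    nlinarith
  have hed' : ε / d ≤ 1/310 := by linarith
  have hed0 : 0 < ε / d := div_pos hε hd0
  -- |u| ≤ ε/d
  have hu1 : u ≤ ε / d := by rw [le_div_iff₀ hd0]; exact ud_le_aux u v d ε hxa2 hxb1
  have hu2 : -(ε/d) ≤ u := by
    rw [neg_le, le_div_iff₀ hd0]; exact ud_le_aux' u v d ε hxb2 hxa1
  have hu1' : u' ≤ ε / d := by rw [le_div_iff₀ hd0]; exact ud_le_aux u' v' d ε hya2 hyb1
  have hu2' : -(ε/d) ≤ u' := by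
    rw [neg_le, le_div_iff₀ hd0]; exact ud_le_aux' u' v' d ε hyb2 hya1
  have hub : u ≤ 1/310 := le_trans hu1 hed'
  have hlb : -(1/310) ≤ u := le_trans (neg_le_neg hed') hu2
  have hub' : u' ≤ 1/310 := le_trans hu1' hed'
  have hlb' : -(1/310) ≤ u' := le_trans (neg_le_neg hed') hu2'
  have hsq : (u + d/2)^2 ≤ (1/2 + 1/310)^2 := sq_le_sq' (by linarith) (by linarith)
  have hsq' : (u' + d/2)^2 ≤ (1/2 + 1/310)^2 := sq_le_sq' (by linarith) (by linarith)
  have hvl : 1/2 ≤ v := half_le_aux ε v _ hε hε1 hv hsq hxa1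
  have hvl' : 1/2 ≤ v' := half_le_aux ε v' _ hε hε1 hv' hsq' hya1
  -- difference of squares of first coordinates
  have hε_le : ε ≤ ε / d := by
    rw [le_div_iff₀ hd0]
    nlinarith [mul_le_mul_of_nonneg_left hd2 hε.le]
  have hbd1 : u - u' ≤ 2*(ε/d) := by linarith
  have hbd1' : u' - u ≤ 2*(ε/d) := by linarith
  have hsum0 : 0 ≤ u + u' + d := by linarith
  have hsum1 : u + u' + d ≤ 2*(ε/d) + 1 := by linarith
  have hp1 : (u - u') * (u + u' + d) ≤ 2*(ε/d) * (2*(ε/d) + 1) :=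
    mul_le_mul hbd1 hsum1 hsum0 (by positivity)
  have hp2 : (u' - u) * (u + u' + d) ≤ 2*(ε/d) * (2*(ε/d) + 1) :=
    mul_le_mul hbd1' hsum1 hsum0 (by positivity)
  have hsmall : 2*(ε/d) * (2*(ε/d) + 1) ≤ 3*(ε/d) := small_aux _ hed0 hed'
  have hexp : (u+d/2)^2 - (u'+d/2)^2 = (u-u')*(u+u'+d) := by ring
  have hexp' : (u'+d/2)^2 - (u+d/2)^2 = (u'-u)*(u+u'+d) := by ring
  have hq : 1 - (1-ε)^2 ≤ 2*ε := by nlinarith [sq_nonneg ε]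
  have hvv1 : v^2 - v'^2 ≤ 5 * (ε/d) := by linarith
  have hvv2 : v'^2 - v^2 ≤ 5 * (ε/d) := by linarith
  have h1 : v - v' ≤ 5 * (ε/d) := diff_le_aux v v' _ hed0.le hvl hvl' hvv1
  have h2 : v' - v ≤ 5 * (ε/d) := diff_le_aux v' v _ hed0.le hvl' hvl hvv2
  have hdv : (v - v')^2 ≤ (5 * (ε/d))^2 := sq_le_sq' (by linarith) h1
  have hdu : (u - u')^2 ≤ (2 * (ε/d))^2 := sq_le_sq' (by linarith) hbd1
  have h4 : (2*(ε/d))^2 = 4*(ε/d)^2 := by ring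
  have h25 : (5*(ε/d))^2 = 25*(ε/d)^2 := by ring
  have h100 : (10 * ε / d)^2 = 100*(ε/d)^2 := by ring
  have e2 : 0 ≤ (ε/d)^2 := sq_nonneg _
  linarith

set_option maxHeartbeats 1600000 in
/-- For `0 < ε < 1/1000` and `10√ε ≤ d ≤ 1`, the upper connected component of the
intersection of the two annuli `{1-ε ≤ ‖·-a‖ ≤ 1}` and `{1-ε ≤ ‖·-b‖ ≤ 1}`, with
`a = (-d/2, 0)` and `b = (d/2, 0)`, has diameter at most `C·ε/d` for a universal `C > 0`. -/
theorem annuli_intersection_component_diameter :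
    ∃ C : ℝ, 0 < C ∧
      ∀ (d ε : ℝ), 0 < ε → ε < 1 / 1000 →
        10 * Real.sqrt ε ≤ d → d ≤ 1 →
        ∀ (a b : EuclideanSpace ℝ (Fin 2)), a = ![-d / 2, 0] → b = ![d / 2, 0] →
        ∀ (x y : EuclideanSpace ℝ (Fin 2)),
          0 ≤ x 1 → 0 ≤ y 1 →
          1 - ε ≤ ‖x - a‖ → ‖x - a‖ ≤ 1 →
          1 - ε ≤ ‖x - b‖ → ‖x - b‖ ≤ 1 →
          1 - ε ≤ ‖y - a‖ → ‖y - a‖ ≤ 1 →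
          1 - ε ≤ ‖y - b‖ → ‖y - b‖ ≤ 1 →
          ‖x - y‖ ≤ C * ε / d := by
  refine ⟨10, by norm_num, ?_⟩
  intro d ε hε hε1 hd1 hd2 a b ha hb x y hx1 hy1 hxa1 hxa2 hxb1 hxb2 hya1 hya2 hyb1 hyb2
  have hnorm : ∀ z w : EuclideanSpace ℝ (Fin 2),
      ‖z - w‖^2 = (z 0 - w 0)^2 + (z 1 - w 1)^2 := by
    intro z w
    rw [EuclideanSpace.norm_eq, Real.sq_sqrt (by positivity)]
    simp [Fin.sum_univ_two, sq_abs]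
  have he : 0 ≤ 1 - ε := by linarith
  have sq_of : ∀ r : ℝ, 1 - ε ≤ r → r ≤ 1 → (1-ε)^2 ≤ r^2 ∧ r^2 ≤ 1 := by
    intro r h1 h2
    constructor
    · exact pow_le_pow_left₀ he h1 2
    · calc r^2 ≤ 1^2 := pow_le_pow_left₀ (by linarith) h2 2
        _ = 1 := one_pow 2
  have ea0 : a 0 = -d/2 := by rw [ha]; rfl
  have ea1 : a 1 = 0 := by rw [ha]; rfl
  have eb0 : b 0 = d/2 := by rw [hb]; rfl
  have eb1 : b 1 = 0 := by rw [hb]; rfl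
  have hXA := hnorm x a
  have hXB := hnorm x b
  have hYA := hnorm y a
  have hYB := hnorm y b
  rw [ea0, ea1] at hXA hYA
  rw [eb0, eb1] at hXB hYB
  have cxa := sq_of _ hxa1 hxa2
  have cxb := sq_of _ hxb1 hxb2
  have cya := sq_of _ hya1 hya2
  have cyb := sq_of _ hyb1 hyb2
  rw [hXA] at cxa
  rw [hXB] at cxb
  rw [hYA] at cya
  rw [hYB] at cyb
  have key := annuli_key d ε (x 0) (x 1) (y 0) (y 1) hε hε1 hd1 hd2 hx1 hy1
    (by rw [show x 0 + d/2 = x 0 - -d/2 by ring, show x 1 = x 1 - 0 by ring]; exact cxa.1)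
    (by rw [show x 0 + d/2 = x 0 - -d/2 by ring, show x 1 = x 1 - 0 by ring]; exact cxa.2)
    (by rw [show x 1 = x 1 - 0 by ring]; exact cxb.1)
    (by rw [show x 1 = x 1 - 0 by ring]; exact cxb.2)
    (by rw [show y 0 + d/2 = y 0 - -d/2 by ring, show y 1 = y 1 - 0 by ring]; exact cya.1)
    (by rw [show y 0 + d/2 = y 0 - -d/2 by ring, show y 1 = y 1 - 0 by ring]; exact cya.2)
    (by rw [show y 1 = y 1 - 0 by ring]; exact cyb.1)
    (by rw [show y 1 = y 1 - 0 by ring]; exact cyb.2)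
  have hd0 : 0 < d := lt_of_lt_of_le (by positivity) hd1
  have hrhs : 0 ≤ 10 * ε / d := by positivity
  have hsq : ‖x - y‖^2 ≤ (10 * ε / d)^2 := by rw [hnorm x y]; exact key
  calc ‖x - y‖ = Real.sqrt (‖x - y‖^2) := (Real.sqrt_sq (norm_nonneg _)).symm
    _ ≤ Real.sqrt ((10 * ε / d)^2) := Real.sqrt_le_sqrt hsq
    _ = 10 * ε / d := Real.sqrt_sq hrhs
end

section
/- There exists a universal constant c > 0 such that for every ε with 0 < ε < 1/1000 there exists N ∈ ℕ such that for all n ≥ N the following holds: if p_j = ((1/2)·cos(2πj/n), (1/2)·sin(2πj/n)) for j = 0, 1, …, n−1 are n equally spaced points on the circle of radius 1/2 centered at the origin, then the number of ordered pairs (i,j) with ‖p_i − p_j‖ ≥ 1 − ε is at least c · √ε · n². -/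
lemma norm_two (x : EuclideanSpace ℝ (Fin 2)) : ‖x‖ = Real.sqrt (x 0 ^ 2 + x 1 ^ 2) := by
  rw [EuclideanSpace.norm_eq, Fin.sum_univ_two, Real.norm_eq_abs, Real.norm_eq_abs, sq_abs, sq_abs]

lemma sq_id (a b : ℝ) :
    ((1/2) * Real.cos a - (1/2) * Real.cos b) ^ 2 + ((1/2) * Real.sin a - (1/2) * Real.sin b) ^ 2
      = Real.sin ((a - b)/2) ^ 2 := by
  have hc : Real.cos (a - b) = Real.cos a * Real.cos b + Real.sin a * Real.sin b :=
    Real.cos_sub a b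
  have h2 : Real.cos (a - b) = 2 * Real.cos ((a - b)/2) ^ 2 - 1 := by
    rw [show a - b = 2 * ((a - b)/2) by ring, Real.cos_two_mul]
    ring_nf
  have h3 : Real.sin ((a - b)/2) ^ 2 = 1 - Real.cos ((a - b)/2) ^ 2 := Real.sin_sq _
  have hpa : Real.sin a ^ 2 + Real.cos a ^ 2 = 1 := Real.sin_sq_add_cos_sq a
  have hpb : Real.sin b ^ 2 + Real.cos b ^ 2 = 1 := Real.sin_sq_add_cos_sq b
  nlinarith [hc, h2, h3, hpa, hpb]

set_option maxHeartbeats 1000000 in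
/-- For `n` equally spaced points on the circle of radius `1/2`, with `n` large enough
depending on `ε`, the number of ordered pairs at distance `≥ 1 - ε` is at least
`c · √ε · n²` for a universal constant `c > 0`. -/
theorem circle_many_antipodes :
    ∃ c : ℝ, 0 < c ∧
      ∀ (ε : ℝ), 0 < ε → ε < 1 / 1000 →
        ∃ N : ℕ, ∀ n : ℕ, N ≤ n →
          let p : Fin n → EuclideanSpace ℝ (Fin 2) := fun j =>
            !₂[(1 / 2) * Real.cos (2 * Real.pi * j / n),
              (1 / 2) * Real.sin (2 * Real.pi * j / n)]
          c * Real.sqrt ε * (n : ℝ) ^ 2 ≤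
            ({q : Fin n × Fin n | 1 - ε ≤ ‖p q.1 - p q.2‖}.ncard : ℝ) := by
  classical
  refine ⟨1/8, by norm_num, ?_⟩
  intro ε hε0 hε1
  set s := Real.sqrt ε with hs_def
  have hs0 : 0 < s := Real.sqrt_pos.mpr hε0
  have hs_sq : s ^ 2 = ε := Real.sq_sqrt hε0.le
  have hs1 : s < 1 := by nlinarith
  refine ⟨⌈(4:ℝ)/s⌉₊ + 100, ?_⟩
  intro n hn p
  have hn100 : 100 ≤ n := by omega
  have hn0 : 0 < n := by omega
  have hnR : (0:ℝ) < n := by exact_mod_cast hn0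
  have hns : 4 ≤ (n:ℝ) * s := by
    have h1 : (⌈(4:ℝ)/s⌉₊ : ℝ) ≤ n := by
      have : ⌈(4:ℝ)/s⌉₊ ≤ n := by omega
      exact_mod_cast this
    have h2 : (4:ℝ)/s ≤ ⌈(4:ℝ)/s⌉₊ := Nat.le_ceil _
    have h3 : (4:ℝ)/s ≤ n := le_trans h2 h1
    calc (4:ℝ) = (4/s) * s := by field_simp
    _ ≤ n * s := by nlinarith
  set k₀ := (n+1)/2 with hk0_def
  set m := ⌊(n:ℝ) * s / 8⌋₊ with hm_def
  have hmR : (m:ℝ) ≤ n * s / 8 := Nat.floor_le (by positivity)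
  have hm1 : (n:ℝ) * s / 8 < m + 1 := Nat.lt_floor_add_one _
  have hk0l : (n:ℝ)/2 ≤ k₀ := by
    have h : n ≤ 2 * k₀ := by omega
    have h' : (n:ℝ) ≤ 2 * k₀ := by exact_mod_cast h
    linarith
  have hk0u : (k₀:ℝ) ≤ ((n:ℝ)+1)/2 := by
    have h : 2 * k₀ ≤ n + 1 := by omega
    have h' : 2 * (k₀:ℝ) ≤ (n:ℝ) + 1 := by exact_mod_cast h
    linarith
  have hklt : k₀ + m < n := by
    have h100 : (100:ℝ) ≤ n := by exact_mod_cast hn100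
    have h : ((k₀:ℝ) + m) < n := by nlinarith
    exact_mod_cast h
  -- key geometric estimate
  have hpi_pos := Real.pi_pos
  have hpisq : Real.pi^2 ≤ 10 := by nlinarith [Real.pi_lt_d2]
  have key : ∀ (i : Fin n) (t : ℕ), t ≤ m →
      1 - ε ≤ ‖p i - p ⟨((i:ℕ) + (k₀ + t)) % n, Nat.mod_lt _ hn0⟩‖ := by
    intro i t ht
    set k := k₀ + t with hk_def
    have hkn : k < n := by omega
    have hkl : k₀ ≤ k := by omega
    set j : Fin n := ⟨((i:ℕ) + k) % n, Nat.mod_lt _ hn0⟩ with hj_def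
    obtain ⟨d, hd_def⟩ : ∃ d, d = ((i:ℕ) + k) / n := ⟨_, rfl⟩
    have hd2 : d < 2 := by
      rw [hd_def]
      exact (Nat.div_lt_iff_lt_mul hn0).mpr (by omega)
    have hmod : (j:ℕ) + n * d = (i:ℕ) + k := by
      rw [hd_def]
      exact Nat.mod_add_div _ _
    have hmodR : (j:ℝ) + (n:ℝ) * d = (i:ℝ) + (k:ℝ) := by exact_mod_cast hmod
    have hjR : (j:ℝ) = (i:ℝ) + (k:ℝ) - (n:ℝ) * d := by linarith
    -- compute norm
    have e0 : (p i - p j) 0 = (1/2) * Real.cos (2*Real.pi*(i:ℝ)/n) -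
        (1/2) * Real.cos (2*Real.pi*(j:ℝ)/n) := rfl
    have e1 : (p i - p j) 1 = (1/2) * Real.sin (2*Real.pi*(i:ℝ)/n) -
        (1/2) * Real.sin (2*Real.pi*(j:ℝ)/n) := rfl
    have hnrm : ‖p i - p j‖ =
        |Real.sin ((2*Real.pi*(i:ℝ)/n - 2*Real.pi*(j:ℝ)/n)/2)| := by
      rw [norm_two, e0, e1, sq_id, Real.sqrt_sq_eq_abs]
    have hne : (n:ℝ) ≠ 0 := hnR.ne'
    have hang : (2*Real.pi*(i:ℝ)/n - 2*Real.pi*(j:ℝ)/n)/2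
        = Real.pi * d - Real.pi * k / n := by
      rw [hjR]
      field_simp
      ring
    have habs : |Real.sin ((2*Real.pi*(i:ℝ)/n - 2*Real.pi*(j:ℝ)/n)/2)|
        = |Real.sin (Real.pi * k / n)| := by
      rw [hang]
      have hd01 : d = 0 ∨ d = 1 := by omega
      rcases hd01 with h | h
      · rw [h]
        push_cast
        rw [show Real.pi * 0 - Real.pi * (k:ℝ) / n = -(Real.pi * k / n) by ring,
          Real.sin_neg, abs_neg]
      · rw [h]
        push_cast
        rw [show Real.pi * 1 - Real.pi * (k:ℝ) / n = Real.pi - Real.pi * k / n by ring,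
          Real.sin_pi_sub]
    -- bound the sine
    have hsin : Real.sin (Real.pi * k / n) =
        Real.cos (Real.pi * k / n - Real.pi / 2) := by
      have h := Real.sin_add_pi_div_two (Real.pi * (k:ℝ) / n - Real.pi/2)
      rw [sub_add_cancel] at h
      exact h
    have hkR2 : (n:ℝ) ≤ 2 * k := by
      have h : n ≤ 2 * k := by omega
      exact_mod_cast h
    have hx0 : 0 ≤ Real.pi * k / n - Real.pi / 2 := by
      rw [sub_nonneg, div_le_div_iff₀ (by norm_num : (0:ℝ) < 2) hnR]
      nlinarith
    have hxu : Real.pi * k / n - Real.pi / 2 ≤ Real.pi * s / 4 := by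
      have hkR : (k:ℝ) ≤ ((n:ℝ)+1)/2 + (n:ℝ)*s/8 := by
        have h1 : (k:ℝ) ≤ (k₀:ℝ) + (m:ℝ) := by
          have h : k ≤ k₀ + m := by omega
          exact_mod_cast h
        linarith
      have h2n : Real.pi * 1 ≤ Real.pi * ((n:ℝ) * s / 4) :=
        mul_le_mul_of_nonneg_left (by linarith) hpi_pos.le
      have hmain : Real.pi * k / n ≤ Real.pi * (((n:ℝ)+1)/2 + (n:ℝ)*s/8) / n := by
        gcongr
      have hexp : Real.pi * (((n:ℝ)+1)/2 + (n:ℝ)*s/8) / n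
          = Real.pi/2 + Real.pi * 1/(2*n) + Real.pi * s / 8 := by
        field_simp
      have h3 : Real.pi * 1/(2*n) ≤ Real.pi * s / 8 := by
        rw [div_le_div_iff₀ (by positivity : (0:ℝ) < 2*n) (by norm_num : (0:ℝ) < 8)]
        nlinarith
      linarith [hmain, hexp ▸ hmain]
    have hcos : 1 - ε ≤ Real.cos (Real.pi * k / n - Real.pi / 2) := by
      have hb := Real.one_sub_sq_div_two_le_cos (x := Real.pi * k / n - Real.pi / 2)
      have h1 : (Real.pi * k / n - Real.pi / 2)^2 ≤ (Real.pi*s/4)^2 :=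
        pow_le_pow_left₀ hx0 hxu 2
      have h2 : (Real.pi*s/4)^2 = Real.pi^2*ε/16 := by rw [← hs_sq]; ring
      have h3 : Real.pi^2*ε/16 ≤ 2*ε := by nlinarith
      linarith
    rw [hnrm, habs]
    calc 1 - ε ≤ Real.cos (Real.pi * k / n - Real.pi / 2) := hcos
    _ ≤ |Real.cos (Real.pi * k / n - Real.pi / 2)| := le_abs_self _
    _ = |Real.sin (Real.pi * k / n)| := by rw [hsin]
  -- counting
  set S : Set (Fin n × Fin n) := {q | 1 - ε ≤ ‖p q.1 - p q.2‖} with hS_def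
  let f : Fin n × Fin (m+1) → Fin n × Fin n := fun q =>
    (q.1, ⟨((q.1:ℕ) + (k₀ + (q.2:ℕ))) % n, Nat.mod_lt _ hn0⟩)
  have hf_inj : Function.Injective f := by
    rintro ⟨i, t⟩ ⟨i', t'⟩ h
    simp only [f, Prod.mk.injEq] at h
    obtain ⟨h1, h2⟩ := h
    subst h1
    have h2' : ((i:ℕ) + k₀ + (t:ℕ)) % n = ((i:ℕ) + k₀ + (t':ℕ)) % n := by
      have := congrArg Fin.val h2
      simpa [Nat.add_assoc] using this
    have hme : (t:ℕ) ≡ (t':ℕ) [MOD n] := Nat.ModEq.add_left_cancel' ((i:ℕ) + k₀) h2'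
    have htn : (t:ℕ) < n := lt_of_lt_of_le t.isLt (by omega)
    have htn' : (t':ℕ) < n := lt_of_lt_of_le t'.isLt (by omega)
    have : (t:ℕ) = (t':ℕ) := by
      have := hme
      unfold Nat.ModEq at this
      rwa [Nat.mod_eq_of_lt htn, Nat.mod_eq_of_lt htn'] at this
    exact Prod.ext rfl (Fin.ext this)
  have hrange : Set.range f ⊆ S := by
    rintro q ⟨⟨i, t⟩, rfl⟩
    exact key i (t:ℕ) (Nat.lt_succ_iff.mp t.isLt)
  have hcard : n * (m+1) ≤ S.ncard := by
    have h1 : Nat.card (Set.range f) = n * (m+1) := by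
      rw [Nat.card_range_of_injective hf_inj]
      simp [Nat.card_eq_fintype_card]
    calc n*(m+1) = (Set.range f).ncard := by rw [← Nat.card_coe_set_eq, h1]
    _ ≤ S.ncard := Set.ncard_le_ncard hrange (Set.toFinite S)
  have hfinal : (1:ℝ)/8 * s * (n:ℝ)^2 ≤ ((n * (m+1) : ℕ) : ℝ) := by
    push_cast
    nlinarith [mul_le_mul_of_nonneg_left hm1.le hnR.le]
  calc (1:ℝ)/8 * s * (n:ℝ)^2 ≤ ((n * (m+1) : ℕ) : ℝ) := hfinal
  _ ≤ (S.ncard : ℝ) := by exact_mod_cast hcard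
end
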